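/- arXiv:1403.6090 — 8 statements merged into one kernel-verified Lean document; each statement's English description precedes it below -/
import Mathlib

section
/- Let m be an even integer with m ≥ 14 and let v = (v_1, …, v_t) be an (m,t)-vector. Then any two distinct variable nodes of the Tanner graph TG(H_m(v)) have at most one common neighbor; equivalently, TG(H_m(v)) contains no cycle of length 4. -/
/-- The Tanner graph TG(H_m(v)): check nodes are `ZMod m`, variable nodes are the pairs
`(i, j) : Fin t × Fin (m / 2)`, and variable node `(i, j)` is adjacent exactly to the
check nodes `2j mod m` and `(v i + 2j) mod m`. -/
def tannerGraph (m t : ℕ) (v : Fin t → ℕ) :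
    SimpleGraph ((ZMod m) ⊕ (Fin t × Fin (m / 2))) :=
  SimpleGraph.fromRel (fun x y =>
    match x, y with
    | Sum.inl a, Sum.inr p =>
        a = ((2 * (p.2 : ℕ) : ℕ) : ZMod m) ∨ a = ((v p.1 + 2 * (p.2 : ℕ) : ℕ) : ZMod m)
    | _, _ => False)

private lemma tg_cast_inj {m a b : ℕ} (ha : a < m) (hb : b < m)
    (h : (a : ZMod m) = (b : ZMod m)) : a = b := by
  rwa [ZMod.natCast_eq_natCast_iff, Nat.ModEq, Nat.mod_eq_of_lt ha, Nat.mod_eq_of_lt hb] at h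

private lemma tg_parity_ne {m a b : ℕ} (hm : Even m) (ha : Even a) (hb : Odd b) :
    (a : ZMod m) ≠ (b : ZMod m) := by
  intro h
  rw [ZMod.natCast_eq_natCast_iff] at h
  have h2 : a ≡ b [MOD 2] := h.of_dvd hm.two_dvd
  rw [Nat.ModEq] at h2
  have := Nat.even_iff.mp ha
  have := Nat.odd_iff.mp hb
  omega

private lemma tg_adj_inr {m t : ℕ} {v : Fin t → ℕ} {p : Fin t × Fin (m / 2)}
    {x : (ZMod m) ⊕ (Fin t × Fin (m / 2))} (h : (tannerGraph m t v).Adj (Sum.inr p) x) :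
    ∃ a : ZMod m, x = Sum.inl a ∧
      (a = ((2 * (p.2 : ℕ) : ℕ) : ZMod m) ∨ a = ((v p.1 + 2 * (p.2 : ℕ) : ℕ) : ZMod m)) := by
  rcases x with a | q
  · refine ⟨a, rfl, ?_⟩
    rw [tannerGraph, SimpleGraph.fromRel_adj] at h
    rcases h.2 with h' | h'
    · exact h'.elim
    · exact h'
  · exfalso
    rw [tannerGraph, SimpleGraph.fromRel_adj] at h
    rcases h.2 with h' | h' <;> exact h'

private lemma tg_adj_inl {m t : ℕ} {v : Fin t → ℕ} {a : ZMod m}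
    {x : (ZMod m) ⊕ (Fin t × Fin (m / 2))} (h : (tannerGraph m t v).Adj (Sum.inl a) x) :
    ∃ p : Fin t × Fin (m / 2), x = Sum.inr p := by
  rcases x with b | p
  · exfalso
    rw [tannerGraph, SimpleGraph.fromRel_adj] at h
    rcases h.2 with h' | h' <;> exact h'
  · exact ⟨p, rfl⟩

/-- Key lemma: two distinct variable nodes have at most one common neighbor. -/
private lemma tg_common_eq (m t : ℕ) (hm : Even m)
    (v : Fin t → ℕ) (hodd : ∀ i, Odd (v i)) (hinj : Function.Injective v)
    (hlt : ∀ i, v i < m) (p q : Fin t × Fin (m / 2)) (hpq : p ≠ q)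
    {x y : (ZMod m) ⊕ (Fin t × Fin (m / 2))}
    (hpx : (tannerGraph m t v).Adj (Sum.inr p) x) (hqx : (tannerGraph m t v).Adj (Sum.inr q) x)
    (hpy : (tannerGraph m t v).Adj (Sum.inr p) y) (hqy : (tannerGraph m t v).Adj (Sum.inr q) y) :
    x = y := by
  have hm2 : m % 2 = 0 := Nat.even_iff.mp hm
  have hp2 : (p.2 : ℕ) < m / 2 := p.2.isLt
  have hq2 : (q.2 : ℕ) < m / 2 := q.2.isLt
  have hpm : 2 * (p.2 : ℕ) < m := by omega
  have hqm : 2 * (q.2 : ℕ) < m := by omega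
  -- If both types of equalities hold, then p = q.
  have hkey : ((2 * (p.2 : ℕ) : ℕ) : ZMod m) = ((2 * (q.2 : ℕ) : ℕ) : ZMod m) →
      ((v p.1 + 2 * (p.2 : ℕ) : ℕ) : ZMod m) = ((v q.1 + 2 * (q.2 : ℕ) : ℕ) : ZMod m) →
      False := by
    intro he ho
    have hj : (p.2 : ℕ) = (q.2 : ℕ) := by
      have := tg_cast_inj hpm hqm he; omega
    rw [ZMod.natCast_eq_natCast_iff] at ho
    rw [hj] at ho
    have hv : v p.1 ≡ v q.1 [MOD m] := ho.add_right_cancel'  _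
    rw [Nat.ModEq, Nat.mod_eq_of_lt (hlt p.1), Nat.mod_eq_of_lt (hlt q.1)] at hv
    exact hpq (Prod.ext (hinj hv) (Fin.ext hj))
  obtain ⟨a, rfl, hap⟩ := tg_adj_inr hpx
  obtain ⟨a', ha', haq⟩ := tg_adj_inr hqx
  have haa : a = a' := by injection ha'
  subst haa
  obtain ⟨b, rfl, hbp⟩ := tg_adj_inr hpy
  obtain ⟨b', hb', hbq⟩ := tg_adj_inr hqy
  have hbb : b = b' := by injection hb'
  subst hbb
  have heven : ∀ r : Fin t × Fin (m / 2), Even (2 * (r.2 : ℕ)) := fun r => even_two_mul _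
  have hoddn : ∀ r : Fin t × Fin (m / 2), Odd (v r.1 + 2 * (r.2 : ℕ)) := fun r =>
    (hodd r.1).add_even (heven r)
  have ha2 : (a = ((2 * (p.2 : ℕ) : ℕ) : ZMod m) ∧ a = ((2 * (q.2 : ℕ) : ℕ) : ZMod m)) ∨
      (a = ((v p.1 + 2 * (p.2 : ℕ) : ℕ) : ZMod m) ∧
        a = ((v q.1 + 2 * (q.2 : ℕ) : ℕ) : ZMod m)) := by
    rcases hap with h1 | h1 <;> rcases haq with h2 | h2
    · exact Or.inl ⟨h1, h2⟩
    · exact absurd (h1 ▸ h2) (tg_parity_ne hm (heven p) (hoddn q))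
    · exact absurd (h2 ▸ h1) (tg_parity_ne hm (heven q) (hoddn p))
    · exact Or.inr ⟨h1, h2⟩
  have hb2 : (b = ((2 * (p.2 : ℕ) : ℕ) : ZMod m) ∧ b = ((2 * (q.2 : ℕ) : ℕ) : ZMod m)) ∨
      (b = ((v p.1 + 2 * (p.2 : ℕ) : ℕ) : ZMod m) ∧
        b = ((v q.1 + 2 * (q.2 : ℕ) : ℕ) : ZMod m)) := by
    rcases hbp with h1 | h1 <;> rcases hbq with h2 | h2
    · exact Or.inl ⟨h1, h2⟩
    · exact absurd (h1 ▸ h2) (tg_parity_ne hm (heven p) (hoddn q))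
    · exact absurd (h2 ▸ h1) (tg_parity_ne hm (heven q) (hoddn p))
    · exact Or.inr ⟨h1, h2⟩
  rcases ha2 with ⟨ha1, ha2'⟩ | ⟨ha1, ha2'⟩ <;> rcases hb2 with ⟨hb1, hb2'⟩ | ⟨hb1, hb2'⟩
  · rw [ha1, hb1]
  · exact (hkey (ha1.symm.trans ha2') (hb1.symm.trans hb2')).elim
  · exact (hkey (hb1.symm.trans hb2') (ha1.symm.trans ha2')).elim
  · rw [ha1, hb1]

/-- for an even `m ≥ 14` and an `(m,t)`-vector `v`, any two distinct variable
nodes of `TG(H_m(v))` have at most one common neighbor; equivalently, `TG(H_m(v))` contains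
no cycle of length `4`. -/
theorem statement3 (m t : ℕ) (hm : Even m) (hm14 : 14 ≤ m)
    (v : Fin t → ℕ) (hodd : ∀ i, Odd (v i)) (hpos : ∀ i, 0 < v i)
    (hmono : StrictMono v) (hlt : ∀ i, v i < m) :
    (∀ p q : Fin t × Fin (m / 2), p ≠ q →
      {x | (tannerGraph m t v).Adj (Sum.inr p) x ∧
           (tannerGraph m t v).Adj (Sum.inr q) x}.ncard ≤ 1) ∧
    (∀ (x : (ZMod m) ⊕ (Fin t × Fin (m / 2))) (c : (tannerGraph m t v).Walk x x),
      c.IsCycle → c.length ≠ 4) := by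
  haveI : NeZero m := ⟨by omega⟩
  have hinj : Function.Injective v := hmono.injective
  have key := tg_common_eq m t hm v hodd hinj hlt
  constructor
  · intro p q hpq
    rw [Set.ncard_le_one (Set.toFinite _)]
    rintro x ⟨hpx, hqx⟩ y ⟨hpy, hqy⟩
    exact key p q hpq hpx hqx hpy hqy
  · intro x c hc hlen
    cases c with
    | nil => simp at hlen
    | cons h1 c => cases c with
      | nil => simp at hlen
      | cons h2 c => cases c with
        | nil => simp at hlen
        | cons h3 c => cases c with
          | nil => simp at hlen
          | cons h4 c => cases c with
            | cons h5 c => simp at hlen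
            | nil =>
              have hnd := hc.support_nodup
              simp [SimpleGraph.Walk.support_cons] at hnd
              rcases x with a | p
              · obtain ⟨p, rfl⟩ := tg_adj_inl h1
                obtain ⟨b, rfl, -⟩ := tg_adj_inr h2
                obtain ⟨q, rfl⟩ := tg_adj_inl h3
                have hpq : p ≠ q := by
                  intro h; subst h; simp at hnd
                have hab : Sum.inl (β := Fin t × Fin (m / 2)) b ≠ Sum.inl a := by
                  simp only [ne_eq, Sum.inl.injEq]
                  intro h; subst h; simp at hnd
                exact hab (key p q hpq h2 h3.symm h1.symm h4)
              · obtain ⟨a, rfl, -⟩ := tg_adj_inr h1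
                obtain ⟨q, rfl⟩ := tg_adj_inl h2
                obtain ⟨b, rfl, -⟩ := tg_adj_inr h3
                have hpq : p ≠ q := by
                  intro h; subst h; simp at hnd
                have hab : Sum.inl (β := Fin t × Fin (m / 2)) a ≠ Sum.inl b := by
                  simp only [ne_eq, Sum.inl.injEq]
                  intro h; subst h; simp at hnd
                exact hab (key p q hpq h1 h2.symm h4.symm h3)
end

section
/- Let m be an even integer with m ≥ 14 and let v = (v_1, …, v_t) be an (m,t)-vector. Then the length of every cycle in the Tanner graph TG(H_m(v)) is divisible by 4; in particular TG(H_m(v)) contains no cycle of length 6 and no cycle of length 10. -/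
/-! Every variable node has exactly two check neighbours, one with an even and one with an odd
label. A trail entering a variable node must leave it through its other neighbour, so along a
trail between check nodes the label parity flips every two steps. A cycle rotated to start at a
check node thus has length `2k` with `k` even. -/

open Sum

lemma ZMod.add_eq_one_of_ne {x y : ZMod 2} (h : x ≠ y) : x + y = 1 := by
  revert x y
  decide

namespace SimpleGraph

variable {α β : Type*} {G : SimpleGraph (α ⊕ β)} {par : α → ZMod 2}

theorem Walk.IsTrail.exists_length_eq_two_mul (hG : G ≤ completeBipartiteGraph α β)
    (hpar : ∀ ⦃w a a'⦄, G.Adj (inr w) (inl a) → G.Adj (inr w) (inl a') → a ≠ a' →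
      par a ≠ par a') :
    ∀ {a b : α} (p : G.Walk (inl a) (inl b)), p.IsTrail →
      ∃ k : ℕ, p.length = 2 * k ∧ par a + par b = k
  | a, _, .nil, _ => ⟨0, rfl, by simp [CharTwo.add_self_eq_zero]⟩
  | _, _, .cons (v := inl _) h _, _ => by simpa using hG h
  | _, _, .cons (v := inr _) _ (.cons (v := inr _) h _), _ => by simpa using hG h
  | a, b, .cons (v := inr w) h (.cons (v := inl a') h' q), hp => by
    obtain ⟨k, hk, hpk⟩ := exists_length_eq_two_mul hG hpar q hp.of_cons.of_cons
    have hne : a ≠ a' := by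
      rintro rfl
      simp at hp
    have hflip : par a + par a' = 1 := ZMod.add_eq_one_of_ne (hpar h.symm h' hne)
    refine ⟨k + 1, by simp [hk]; ring, ?_⟩
    push_cast
    linear_combination hflip + hpk - CharTwo.add_self_eq_zero (par a')

theorem Walk.IsCycle.four_dvd_length (hG : G ≤ completeBipartiteGraph α β)
    (hpar : ∀ ⦃w a a'⦄, G.Adj (inr w) (inl a) → G.Adj (inr w) (inl a') → a ≠ a' →
      par a ≠ par a')
    {x : α ⊕ β} {c : G.Walk x x} (hc : c.IsCycle) : 4 ∣ c.length := by
  obtain ⟨a, ha⟩ : ∃ a, inl a ∈ c.support := by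
    rcases x with a | _
    · exact ⟨a, c.start_mem_support⟩
    · have hsnd : c.snd.isLeft := by simpa using hG (c.adj_snd hc.not_nil)
      obtain ⟨a, ha⟩ := Sum.isLeft_iff.mp hsnd
      exact ⟨a, ha ▸ c.getVert_mem_support 1⟩
  classical
  rw [← c.length_rotate _ ha]
  obtain ⟨k, hk, hpk⟩ := (hc.rotate ha).isTrail.exists_length_eq_two_mul hG hpar
  rw [CharTwo.add_self_eq_zero, eq_comm, ZMod.natCast_eq_zero_iff_even] at hpk
  obtain ⟨j, rfl⟩ := hpk
  exact ⟨j, by omega⟩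

end SimpleGraph

lemma tannerGraph_adj_inr_inl {m t : ℕ} {v : Fin t → ℕ} {p : Fin t × Fin (m / 2)}
    {a : ZMod m} :
    (tannerGraph m t v).Adj (inr p) (inl a) ↔
      a = ((2 * (p.2 : ℕ) : ℕ) : ZMod m) ∨ a = ((v p.1 + 2 * (p.2 : ℕ) : ℕ) : ZMod m) := by
  simp [tannerGraph]

lemma tannerGraph_le_completeBipartiteGraph (m t : ℕ) (v : Fin t → ℕ) :
    tannerGraph m t v ≤ completeBipartiteGraph _ _ := by
  rintro (a | p) (b | q) h <;> simp_all [tannerGraph]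

lemma tannerGraph_castHom_ne {m t : ℕ} (hm : 2 ∣ m) {v : Fin t → ℕ} (hodd : ∀ i, Odd (v i))
    ⦃p : Fin t × Fin (m / 2)⦄ ⦃a a' : ZMod m⦄ (ha : (tannerGraph m t v).Adj (inr p) (inl a))
    (ha' : (tannerGraph m t v).Adj (inr p) (inl a')) (hne : a ≠ a') :
    ZMod.castHom hm (ZMod 2) a ≠ ZMod.castHom hm (ZMod 2) a' := by
  have h0 : ((2 * (p.2 : ℕ) : ℕ) : ZMod 2) = 0 := (even_two_mul _).natCast_zmod_two
  have h1 : ((v p.1 + 2 * (p.2 : ℕ) : ℕ) : ZMod 2) = 1 :=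
    ((hodd p.1).add_even (even_two_mul _)).natCast_zmod_two
  rw [tannerGraph_adj_inr_inl] at ha ha'
  rcases ha with rfl | rfl <;> rcases ha' with rfl | rfl <;>
    first | exact absurd rfl hne | rw [map_natCast, map_natCast, h0, h1]; decide

theorem statement4_general (m t : ℕ) (hm : Even m)
    (v : Fin t → ℕ) (hodd : ∀ i, Odd (v i)) :
    ∀ (x : (ZMod m) ⊕ (Fin t × Fin (m / 2))) (c : (tannerGraph m t v).Walk x x),
      c.IsCycle → 4 ∣ c.length ∧ c.length ≠ 6 ∧ c.length ≠ 10 := by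
  intro x c hc
  have h4 : 4 ∣ c.length := hc.four_dvd_length (tannerGraph_le_completeBipartiteGraph m t v)
    (tannerGraph_castHom_ne hm.two_dvd hodd)
  omega

/-- for an even `m ≥ 14` and an `(m,t)`-vector `v`, the length of every cycle in
`TG(H_m(v))` is divisible by `4`; in particular `TG(H_m(v))` has no cycle of length `6` and
no cycle of length `10`. -/
theorem statement4 (m t : ℕ) (hm : Even m) (hm14 : 14 ≤ m)
    (v : Fin t → ℕ) (hodd : ∀ i, Odd (v i)) (hpos : ∀ i, 0 < v i)
    (hmono : StrictMono v) (hlt : ∀ i, v i < m) :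
    ∀ (x : (ZMod m) ⊕ (Fin t × Fin (m / 2))) (c : (tannerGraph m t v).Walk x x),
      c.IsCycle → 4 ∣ c.length ∧ c.length ≠ 6 ∧ c.length ≠ 10 :=
  statement4_general m t hm v hodd
end

section
/- Let m be an even integer with m ≥ 14 and let v = (v_1, …, v_t) be an (m,t)-vector with t ≥ 2. Then the girth of the Tanner graph TG(H_m(v)) is at least 8. -/
open SimpleGraph Sum

section TannerAux

variable {m t : ℕ} {v : Fin t → ℕ}

lemma not_adj_inl_inl (a b : ZMod m) :
    ¬ (tannerGraph m t v).Adj (inl a) (inl b) := by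
  simp [tannerGraph, SimpleGraph.fromRel_adj]

lemma not_adj_inr_inr (p q : Fin t × Fin (m/2)) :
    ¬ (tannerGraph m t v).Adj (inr p) (inr q) := by
  simp [tannerGraph, SimpleGraph.fromRel_adj]

lemma adj_inl_inr {a : ZMod m} {p : Fin t × Fin (m/2)}
    (h : (tannerGraph m t v).Adj (inl a) (inr p)) :
    a = ((2 * (p.2 : ℕ) : ℕ) : ZMod m) ∨ a = ((v p.1 + 2 * (p.2 : ℕ) : ℕ) : ZMod m) := by
  simpa [tannerGraph, SimpleGraph.fromRel_adj] using h

lemma parity_walk {V : Type*} (G : SimpleGraph V) (g : V → ZMod 2)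
    (h : ∀ x y, G.Adj x y → g x ≠ g y) {x y : V} (w : G.Walk x y) :
    (w.length : ZMod 2) = g y - g x := by
  induction w with
  | nil => simp
  | cons h' w ih =>
    have hne := h _ _ h'
    have key : ∀ r s q : ZMod 2, r ≠ s → (q - s) + 1 = q - r := by decide
    rw [SimpleGraph.Walk.length_cons, Nat.cast_add, Nat.cast_one, ih]
    exact key _ _ _ hne

lemma parity_ne (hm2 : 2 ∣ m) (hodd : ∀ i, Odd (v i))
    {a b : ZMod m} {p : Fin t × Fin (m/2)}
    (ha : a = ((2 * (p.2 : ℕ) : ℕ) : ZMod m) ∨ a = ((v p.1 + 2 * (p.2 : ℕ) : ℕ) : ZMod m))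
    (hb : b = ((2 * (p.2 : ℕ) : ℕ) : ZMod m) ∨ b = ((v p.1 + 2 * (p.2 : ℕ) : ℕ) : ZMod m))
    (hab : a ≠ b) :
    ZMod.castHom hm2 (ZMod 2) a ≠ ZMod.castHom hm2 (ZMod 2) b := by
  have h2 : (2 : ZMod 2) = 0 := by decide
  have h0 : (ZMod.castHom hm2 (ZMod 2)) (((2 * (p.2 : ℕ) : ℕ) : ZMod m)) = 0 := by
    rw [map_natCast]; push_cast; rw [h2]; ring
  have h1 : (ZMod.castHom hm2 (ZMod 2)) (((v p.1 + 2 * (p.2 : ℕ) : ℕ) : ZMod m)) = 1 := by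
    obtain ⟨k, hk⟩ := hodd p.1
    rw [map_natCast, hk]; push_cast; rw [h2]; ring
  rcases ha with ha | ha <;> rcases hb with hb | hb <;> subst ha <;> subst hb
  · exact absurd rfl hab
  · rw [h0, h1]; decide
  · rw [h0, h1]; decide
  · exact absurd rfl hab

lemma cn_inj (hm0 : 14 ≤ m) {p q : Fin t × Fin (m/2)}
    (h : ((2 * (p.2 : ℕ) : ℕ) : ZMod m) = ((2 * (q.2 : ℕ) : ℕ) : ZMod m)) : p.2 = q.2 := by
  haveI : NeZero m := ⟨by omega⟩
  have hp : 2 * (p.2 : ℕ) < m := by have := p.2.2; omega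
  have hq : 2 * (q.2 : ℕ) < m := by have := q.2.2; omega
  have h' := congrArg ZMod.val h
  rw [ZMod.val_cast_of_lt hp, ZMod.val_cast_of_lt hq] at h'
  exact Fin.ext (by omega)

lemma no4 (hm14 : 14 ≤ m) (hm2 : 2 ∣ m) (hodd : ∀ i, Odd (v i))
    (hmono : StrictMono v) (hlt : ∀ i, v i < m)
    {a b : ZMod m} {p q : Fin t × Fin (m/2)}
    (hap : a = ((2 * (p.2 : ℕ) : ℕ) : ZMod m) ∨ a = ((v p.1 + 2 * (p.2 : ℕ) : ℕ) : ZMod m))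
    (hbp : b = ((2 * (p.2 : ℕ) : ℕ) : ZMod m) ∨ b = ((v p.1 + 2 * (p.2 : ℕ) : ℕ) : ZMod m))
    (haq : a = ((2 * (q.2 : ℕ) : ℕ) : ZMod m) ∨ a = ((v q.1 + 2 * (q.2 : ℕ) : ℕ) : ZMod m))
    (hbq : b = ((2 * (q.2 : ℕ) : ℕ) : ZMod m) ∨ b = ((v q.1 + 2 * (q.2 : ℕ) : ℕ) : ZMod m))
    (hab : a ≠ b) : p = q := by
  haveI : NeZero m := ⟨by omega⟩
  have h2 : (2 : ZMod 2) = 0 := by decide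
  set π := ZMod.castHom hm2 (ZMod 2) with hπ
  have h0 : ∀ r : Fin t × Fin (m/2), π (((2 * (r.2 : ℕ) : ℕ) : ZMod m)) = 0 := by
    intro r; rw [map_natCast]; push_cast; rw [h2]; ring
  have h1 : ∀ r : Fin t × Fin (m/2), π (((v r.1 + 2 * (r.2 : ℕ) : ℕ) : ZMod m)) = 1 := by
    intro r; obtain ⟨k, hk⟩ := hodd r.1
    rw [map_natCast, hk]; push_cast; rw [h2]; ring
  have core : ((2 * (p.2 : ℕ) : ℕ) : ZMod m) = ((2 * (q.2 : ℕ) : ℕ) : ZMod m) →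
      ((v p.1 + 2 * (p.2 : ℕ) : ℕ) : ZMod m) = ((v q.1 + 2 * (q.2 : ℕ) : ℕ) : ZMod m) →
      p = q := by
    intro e1 e2
    have hj : p.2 = q.2 := cn_inj hm14 e1
    push_cast at e2
    rw [hj] at e2
    have hv : ((v p.1 : ℕ) : ZMod m) = ((v q.1 : ℕ) : ZMod m) := add_right_cancel e2
    have hv' := congrArg ZMod.val hv
    rw [ZMod.val_cast_of_lt (hlt p.1), ZMod.val_cast_of_lt (hlt q.1)] at hv'
    exact Prod.ext (hmono.injective hv') hj
  have ne01 : (0 : ZMod 2) ≠ 1 := by decide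
  rcases hap with ha | ha
  · have hb : b = ((v p.1 + 2 * (p.2 : ℕ) : ℕ) : ZMod m) := by
      rcases hbp with h | h
      · exact absurd (ha.trans h.symm) hab
      · exact h
    have ha' : a = ((2 * (q.2 : ℕ) : ℕ) : ZMod m) := by
      rcases haq with h | h
      · exact h
      · exfalso; have := congrArg π (ha.symm.trans h); rw [h0, h1] at this; exact ne01 this
    have hb' : b = ((v q.1 + 2 * (q.2 : ℕ) : ℕ) : ZMod m) := by
      rcases hbq with h | h
      · exfalso; have := congrArg π (hb.symm.trans h); rw [h1, h0] at this; exact ne01 this.symm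
      · exact h
    exact core (ha ▸ ha') (hb ▸ hb')
  · have hb : b = ((2 * (p.2 : ℕ) : ℕ) : ZMod m) := by
      rcases hbp with h | h
      · exact h
      · exact absurd (ha.trans h.symm) hab
    have ha' : a = ((v q.1 + 2 * (q.2 : ℕ) : ℕ) : ZMod m) := by
      rcases haq with h | h
      · exfalso; have := congrArg π (ha.symm.trans h); rw [h1, h0] at this; exact ne01 this.symm
      · exact h
    have hb' : b = ((2 * (q.2 : ℕ) : ℕ) : ZMod m) := by
      rcases hbq with h | h
      · exact h
      · exfalso; have := congrArg π (hb.symm.trans h); rw [h0, h1] at this; exact ne01 this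
    exact core (hb ▸ hb') (ha ▸ ha')

lemma cycle4 {V : Type*} {G : SimpleGraph V} {s : V} (w : G.Walk s s)
    (hw : w.IsCycle) (h4 : w.length = 4) :
    ∃ x1 x2 x3 : V, G.Adj s x1 ∧ G.Adj x1 x2 ∧ G.Adj x2 x3 ∧ G.Adj x3 s ∧
      s ≠ x2 ∧ x1 ≠ x3 := by
  obtain _ | ⟨h1, w⟩ := w
  · simp at h4
  rename_i x1
  obtain _ | ⟨h2, w⟩ := w
  · simp at h4
  rename_i x2
  obtain _ | ⟨h3, w⟩ := w
  · simp at h4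
  rename_i x3
  obtain _ | ⟨h5, w⟩ := w
  · simp at h4
  rename_i x4
  obtain _ | ⟨h6, w⟩ := w
  · have hnd := hw.2
    simp [List.nodup_cons] at hnd
    exact ⟨x1, x2, x3, h1, h2, h3, h5, by tauto, by tauto⟩
  · simp [SimpleGraph.Walk.length_cons] at h4

lemma cycle6 {V : Type*} {G : SimpleGraph V} {s : V} (w : G.Walk s s)
    (hw : w.IsCycle) (h6 : w.length = 6) :
    ∃ x1 x2 x3 x4 x5 : V, G.Adj s x1 ∧ G.Adj x1 x2 ∧ G.Adj x2 x3 ∧ G.Adj x3 x4 ∧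
      G.Adj x4 x5 ∧ G.Adj x5 s ∧
      s ≠ x2 ∧ x2 ≠ x4 ∧ s ≠ x4 ∧ x1 ≠ x3 ∧ x3 ≠ x5 ∧ x1 ≠ x5 := by
  obtain _ | ⟨h1, w⟩ := w
  · simp at h6
  rename_i x1
  obtain _ | ⟨h2, w⟩ := w
  · simp at h6
  rename_i x2
  obtain _ | ⟨h3, w⟩ := w
  · simp at h6
  rename_i x3
  obtain _ | ⟨h4, w⟩ := w
  · simp at h6
  rename_i x4
  obtain _ | ⟨h5, w⟩ := w
  · simp at h6
  rename_i x5
  obtain _ | ⟨ha, w⟩ := w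
  · simp at h6
  rename_i x6
  obtain _ | ⟨hb, w⟩ := w
  · have hnd := hw.2
    simp [List.nodup_cons] at hnd
    exact ⟨x1, x2, x3, x4, x5, h1, h2, h3, h4, h5, ha,
      by tauto, by tauto, by tauto, by tauto, by tauto, by tauto⟩
  · simp [SimpleGraph.Walk.length_cons] at h6

end TannerAux

/-- for an even `m ≥ 14` and an `(m,t)`-vector `v` with `t ≥ 2`, the girth of
the Tanner graph `TG(H_m(v))` (the length of its shortest cycle) is at least `8`. -/
theorem statement5 (m t : ℕ) (hm : Even m) (hm14 : 14 ≤ m) (ht : 2 ≤ t)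
    (v : Fin t → ℕ) (hodd : ∀ i, Odd (v i)) (hpos : ∀ i, 0 < v i)
    (hmono : StrictMono v) (hlt : ∀ i, v i < m) :
    8 ≤ (tannerGraph m t v).egirth := by
  have hm2 : (2 : ℕ) ∣ m := hm.two_dvd
  rw [SimpleGraph.le_egirth]
  intro s w hw
  have h3 := hw.three_le_length
  suffices h8 : 8 ≤ w.length by exact_mod_cast h8
  by_contra hlen
  push_neg at hlen
  have heven : Even w.length := by
    have hcol := parity_walk (tannerGraph m t v)
        (Sum.elim (fun _ => (0 : ZMod 2)) (fun _ => 1)) ?_ w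
    · rw [sub_self] at hcol
      exact even_iff_two_dvd.mpr ((ZMod.natCast_eq_zero_iff _ 2).mp hcol)
    · intro x y hxy
      rcases x with a | p <;> rcases y with b | q
      · exact absurd hxy (not_adj_inl_inl a b)
      · simp
      · simp
      · exact absurd hxy (not_adj_inr_inr p q)
  have h46 : w.length = 4 ∨ w.length = 6 := by
    rcases heven with ⟨k, hk⟩; omega
  have key3 : ∀ x y z : ZMod 2, x ≠ y → y ≠ z → x ≠ z → False := by decide
  rcases h46 with h4 | h6
  · obtain ⟨x1, x2, x3, e1, e2, e3, e4, hne1, hne2⟩ := cycle4 w hw h4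
    rcases s with a | p
    · rcases x1 with b | p
      · exact not_adj_inl_inl _ _ e1
      rcases x2 with b | q
      swap
      · exact not_adj_inr_inr _ _ e2
      rcases x3 with c | q
      · exact not_adj_inl_inl _ _ e3
      have hab : a ≠ b := fun h => hne1 (by rw [h])
      have hpq : p ≠ q := fun h => hne2 (by rw [h])
      exact hpq (no4 hm14 hm2 hodd hmono hlt (adj_inl_inr e1) (adj_inl_inr e2.symm)
        (adj_inl_inr e4.symm) (adj_inl_inr e3) hab)
    · rcases x1 with a | q
      swap
      · exact not_adj_inr_inr _ _ e1
      rcases x2 with b | q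
      · exact not_adj_inl_inl _ _ e2
      rcases x3 with b | r
      swap
      · exact not_adj_inr_inr _ _ e3
      have hpq : p ≠ q := fun h => hne1 (by rw [h])
      have hab : a ≠ b := fun h => hne2 (by rw [h])
      exact hpq (no4 hm14 hm2 hodd hmono hlt (adj_inl_inr e1.symm) (adj_inl_inr e4)
        (adj_inl_inr e2) (adj_inl_inr e3.symm) hab)
  · obtain ⟨x1, x2, x3, x4, x5, e1, e2, e3, e4, e5, e6,
      hd1, hd2, hd3, hd4, hd5, hd6⟩ := cycle6 w hw h6
    rcases s with a | p
    · rcases x1 with b | p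
      · exact not_adj_inl_inl _ _ e1
      rcases x2 with b | q
      swap
      · exact not_adj_inr_inr _ _ e2
      rcases x3 with c | q
      · exact not_adj_inl_inl _ _ e3
      rcases x4 with c | r
      swap
      · exact not_adj_inr_inr _ _ e4
      rcases x5 with d | r
      · exact not_adj_inl_inl _ _ e5
      have hab : a ≠ b := fun h => hd1 (by rw [h])
      have hbc : b ≠ c := fun h => hd2 (by rw [h])
      have hac : a ≠ c := fun h => hd3 (by rw [h])
      exact key3 _ _ _
        (parity_ne hm2 hodd (adj_inl_inr e1) (adj_inl_inr e2.symm) hab)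
        (parity_ne hm2 hodd (adj_inl_inr e3) (adj_inl_inr e4.symm) hbc)
        (parity_ne hm2 hodd (adj_inl_inr e6.symm) (adj_inl_inr e5) hac)
    · rcases x1 with a | q
      swap
      · exact not_adj_inr_inr _ _ e1
      rcases x2 with b | q
      · exact not_adj_inl_inl _ _ e2
      rcases x3 with b | r
      swap
      · exact not_adj_inr_inr _ _ e3
      rcases x4 with c | r
      · exact not_adj_inl_inl _ _ e4
      rcases x5 with c | u
      swap
      · exact not_adj_inr_inr _ _ e5
      have hab : a ≠ b := fun h => hd4 (by rw [h])
      have hbc : b ≠ c := fun h => hd5 (by rw [h])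
      have hac : a ≠ c := fun h => hd6 (by rw [h])
      exact key3 _ _ _
        (parity_ne hm2 hodd (adj_inl_inr e2) (adj_inl_inr e3.symm) hab)
        (parity_ne hm2 hodd (adj_inl_inr e4) (adj_inl_inr e5.symm) hbc)
        (parity_ne hm2 hodd (adj_inl_inr e1.symm) (adj_inl_inr e6) hac)
end

section
/- Let m be an even integer with m ≥ 14 and let v = (v_1, …, v_t) be an (m,t)-vector. Suppose that for all indices k_1, k_2, k_3, k_4 ∈ {1, …, t} with {k_1, k_2} ∩ {k_3, k_4} = ∅ one has (v_{k_1} + v_{k_2}) − (v_{k_3} + v_{k_4}) ∉ {0, m, −m}. Then the Tanner graph TG(H_m(v)) contains no cycle of length 8. -/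
/-- `c` is a neighbour of the variable node `p` in the Tanner graph. -/
def nbr (m t : ℕ) (v : Fin t → ℕ) (c : ZMod m) (p : Fin t × Fin (m / 2)) : Prop :=
  c = ((2 * (p.2 : ℕ) : ℕ) : ZMod m) ∨ c = ((v p.1 + 2 * (p.2 : ℕ) : ℕ) : ZMod m)

lemma not_adj_ll (m t : ℕ) (v : Fin t → ℕ) (a b : ZMod m) :
    ¬ (tannerGraph m t v).Adj (Sum.inl a) (Sum.inl b) := by
  simp [tannerGraph, SimpleGraph.fromRel_adj]

lemma not_adj_rr (m t : ℕ) (v : Fin t → ℕ) (p q : Fin t × Fin (m / 2)) :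
    ¬ (tannerGraph m t v).Adj (Sum.inr p) (Sum.inr q) := by
  simp [tannerGraph, SimpleGraph.fromRel_adj]

lemma adj_lr (m t : ℕ) (v : Fin t → ℕ) (a : ZMod m) (p : Fin t × Fin (m / 2)) :
    (tannerGraph m t v).Adj (Sum.inl a) (Sum.inr p) ↔ nbr m t v a p := by
  simp [tannerGraph, SimpleGraph.fromRel_adj, nbr]

lemma adj_rl (m t : ℕ) (v : Fin t → ℕ) (a : ZMod m) (p : Fin t × Fin (m / 2)) :
    (tannerGraph m t v).Adj (Sum.inr p) (Sum.inl a) ↔ nbr m t v a p := by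
  rw [SimpleGraph.adj_comm]; exact adj_lr m t v a p

/-- Key arithmetic lemma: four variable nodes and four check nodes cannot form an 8-cycle. -/
lemma key (m t : ℕ) (hm : Even m) (hm14 : 14 ≤ m)
    (v : Fin t → ℕ) (hodd : ∀ i, Odd (v i)) (hpos : ∀ i, 0 < v i) (hlt : ∀ i, v i < m)
    (hcond : ∀ k1 k2 k3 k4 : Fin t, k1 ≠ k3 → k1 ≠ k4 → k2 ≠ k3 → k2 ≠ k4 →
      ((v k1 : ℤ) + (v k2 : ℤ)) - ((v k3 : ℤ) + (v k4 : ℤ)) ∉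
        ({0, (m : ℤ), -(m : ℤ)} : Set ℤ))
    (c1 c2 c3 c4 : ZMod m) (p1 p2 p3 p4 : Fin t × Fin (m / 2))
    (h1 : nbr m t v c1 p1) (h2 : nbr m t v c2 p1)
    (h3 : nbr m t v c2 p2) (h4 : nbr m t v c3 p2)
    (h5 : nbr m t v c3 p3) (h6 : nbr m t v c4 p3)
    (h7 : nbr m t v c4 p4) (h8 : nbr m t v c1 p4)
    (hc12 : c1 ≠ c2) (hc23 : c2 ≠ c3) (hc34 : c3 ≠ c4) (hc41 : c4 ≠ c1)
    (hp12 : p1 ≠ p2) (hp23 : p2 ≠ p3) (hp34 : p3 ≠ p4) (hp41 : p4 ≠ p1) : False := by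
  haveI : NeZero m := ⟨by omega⟩
  have h2m : (2 : ℕ) ∣ m := hm.two_dvd
  set π : ZMod m →+* ZMod 2 := ZMod.castHom h2m (ZMod 2) with hπ
  have hhalf : 2 * (m / 2) = m := Nat.two_mul_div_two_of_even hm
  have pe : ∀ j : ℕ, π ((2 * j : ℕ) : ZMod m) = 0 := by
    intro j; rw [map_natCast]; push_cast; ring_nf
    simp [show (2 : ZMod 2) = 0 from rfl]
  have po : ∀ (i : Fin t) (j : ℕ), π ((v i + 2 * j : ℕ) : ZMod m) = 1 := by
    intro i j; rw [map_natCast]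
    obtain ⟨k, hk⟩ := hodd i
    rw [hk]; push_cast
    have : (2 : ZMod 2) = 0 := rfl
    rw [this]; ring
  have val_inj : ∀ (j j' : Fin (m / 2)),
      ((2 * (j : ℕ) : ℕ) : ZMod m) = ((2 * (j' : ℕ) : ℕ) : ZMod m) → j = j' := by
    intro j j' h
    have hj := j.2; have hj' := j'.2
    have e1 : ((2 * (j : ℕ) : ℕ) : ZMod m).val = 2 * (j : ℕ) :=
      ZMod.val_natCast_of_lt (by omega)
    have e2 : ((2 * (j' : ℕ) : ℕ) : ZMod m).val = 2 * (j' : ℕ) :=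
      ZMod.val_natCast_of_lt (by omega)
    have := e1 ▸ e2 ▸ congrArg ZMod.val h
    exact Fin.ext (by omega)
  have idx : ∀ (c : ZMod m) (p q : Fin t × Fin (m / 2)),
      nbr m t v c p → nbr m t v c q → p ≠ q → p.1 ≠ q.1 := by
    rintro c p q (h | h) (h' | h') hpq heq
    · exact hpq (Prod.ext heq (val_inj _ _ (h.symm.trans h')))
    · have : (0 : ZMod 2) = 1 := by rw [← pe (p.2 : ℕ), ← h, h', po]
      exact absurd this (by decide)
    · have : (0 : ZMod 2) = 1 := by rw [← pe (q.2 : ℕ), ← h', h, po]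
      exact absurd this (by decide)
    · have hh : ((2 * (p.2 : ℕ) : ℕ) : ZMod m) = ((2 * (q.2 : ℕ) : ℕ) : ZMod m) := by
        have := h.symm.trans h'
        rw [heq] at this
        push_cast at this ⊢
        linear_combination this
      exact hpq (Prod.ext heq (val_inj _ _ hh))
  have step : ∀ (c c' : ZMod m) (p : Fin t × Fin (m / 2)),
      nbr m t v c p → nbr m t v c' p → c ≠ c' →
      (π c = 0 ∧ π c' = 1 ∧ c' - c = ((v p.1 : ℕ) : ZMod m)) ∨
      (π c = 1 ∧ π c' = 0 ∧ c - c' = ((v p.1 : ℕ) : ZMod m)) := by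
    rintro c c' p (h | h) (h' | h') hne
    · exact absurd (h.trans h'.symm) hne
    · left; refine ⟨h ▸ pe _, h' ▸ po _ _, ?_⟩
      rw [h, h']; push_cast; ring
    · right; refine ⟨h ▸ po _ _, h' ▸ pe _, ?_⟩
      rw [h, h']; push_cast; ring
    · exact absurd (h.trans h'.symm) hne
  have s1 := step c1 c2 p1 h1 h2 hc12
  have s2 := step c2 c3 p2 h3 h4 hc23
  have s3 := step c3 c4 p3 h5 h6 hc34
  have s4 := step c4 c1 p4 h7 h8 hc41
  have hsum : ((v p1.1 : ℕ) : ZMod m) + ((v p3.1 : ℕ) : ZMod m)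
      = ((v p2.1 : ℕ) : ZMod m) + ((v p4.1 : ℕ) : ZMod m) := by
    rcases s1 with ⟨q1, q2, e1⟩ | ⟨q1, q2, e1⟩ <;>
      rcases s2 with ⟨r1, r2, e2⟩ | ⟨r1, r2, e2⟩ <;>
      rcases s3 with ⟨u1, u2, e3⟩ | ⟨u1, u2, e3⟩ <;>
      rcases s4 with ⟨w1, w2, e4⟩ | ⟨w1, w2, e4⟩ <;>
      first
      | exact absurd (q2.symm.trans r1) (by decide)
      | exact absurd (r2.symm.trans u1) (by decide)
      | exact absurd (u2.symm.trans w1) (by decide)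
      | exact absurd (w2.symm.trans q1) (by decide)
      | linear_combination e1 - e2 + e3 - e4
      | linear_combination -e1 + e2 - e3 + e4
  have hdvd : (m : ℤ) ∣ ((v p1.1 : ℤ) + (v p3.1 : ℤ) - (v p2.1 : ℤ) - (v p4.1 : ℤ)) := by
    rw [← ZMod.intCast_zmod_eq_zero_iff_dvd]
    push_cast
    push_cast at hsum
    linear_combination hsum
  have hi12 : p1.1 ≠ p2.1 := idx c2 p1 p2 h2 h3 hp12
  have hi14 : p1.1 ≠ p4.1 := idx c1 p1 p4 h1 h8 hp41.symm
  have hi32 : p3.1 ≠ p2.1 := idx c3 p3 p2 h5 h4 hp23.symm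
  have hi34 : p3.1 ≠ p4.1 := idx c4 p3 p4 h6 h7 hp34
  have hcc := hcond p1.1 p3.1 p2.1 p4.1 hi12 hi14 hi32 hi34
  simp only [Set.mem_insert_iff, Set.mem_singleton_iff, not_or] at hcc
  obtain ⟨hc0, hcm, hcmn⟩ := hcc
  obtain ⟨q, hq⟩ := hdvd
  have b1 := hpos p1.1; have b2 := hpos p2.1; have b3 := hpos p3.1; have b4 := hpos p4.1
  have l1 := hlt p1.1; have l2 := hlt p2.1; have l3 := hlt p3.1; have l4 := hlt p4.1
  have hqlt : q < 2 := by nlinarith [hq]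
  have hqgt : -2 < q := by nlinarith [hq]
  interval_cases q <;> omega

/-- for an even `m ≥ 14` and an `(m,t)`-vector `v`, if for all indices
`k₁, k₂, k₃, k₄` with `{k₁, k₂} ∩ {k₃, k₄} = ∅` one has
`(v k₁ + v k₂) - (v k₃ + v k₄) ∉ {0, m, -m}`, then the Tanner graph `TG(H_m(v))` contains
no cycle of length `8`. -/
theorem statement7 (m t : ℕ) (hm : Even m) (hm14 : 14 ≤ m)
    (v : Fin t → ℕ) (hodd : ∀ i, Odd (v i)) (hpos : ∀ i, 0 < v i)
    (hmono : StrictMono v) (hlt : ∀ i, v i < m)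
    (hcond : ∀ k1 k2 k3 k4 : Fin t, k1 ≠ k3 → k1 ≠ k4 → k2 ≠ k3 → k2 ≠ k4 →
      ((v k1 : ℤ) + (v k2 : ℤ)) - ((v k3 : ℤ) + (v k4 : ℤ)) ∉
        ({0, (m : ℤ), -(m : ℤ)} : Set ℤ)) :
    ∀ (x : (ZMod m) ⊕ (Fin t × Fin (m / 2))) (c : (tannerGraph m t v).Walk x x),
      c.IsCycle → c.length ≠ 8 := by
  intro x c hc hlen
  cases c with
  | nil => simp at hlen
  | cons h1 c => cases c with
  | nil => simp at hlen
  | cons h2 c => cases c with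
  | nil => simp at hlen
  | cons h3 c => cases c with
  | nil => simp at hlen
  | cons h4 c => cases c with
  | nil => simp at hlen
  | cons h5 c => cases c with
  | nil => simp at hlen
  | cons h6 c => cases c with
  | nil => simp at hlen
  | cons h7 c => cases c with
  | nil => simp at hlen
  | cons h8 c => cases c with
  | cons h9 c => simp [SimpleGraph.Walk.length_cons] at hlen
  | nil =>
    have hnd := hc.2
    simp [SimpleGraph.Walk.support_cons, List.nodup_cons] at hnd
    rename_i b1 b2 b3 b4 b5 b6 b7
    rcases x with a0 | p0
    · -- x is a check node
      rcases b1 with a1 | p1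
      · exact not_adj_ll m t v _ _ h1
      rcases b2 with a2 | p2
      swap
      · exact not_adj_rr m t v _ _ h2
      rcases b3 with a3 | p3
      · exact not_adj_ll m t v _ _ h3
      rcases b4 with a4 | p4
      swap
      · exact not_adj_rr m t v _ _ h4
      rcases b5 with a5 | p5
      · exact not_adj_ll m t v _ _ h5
      rcases b6 with a6 | p6
      swap
      · exact not_adj_rr m t v _ _ h6
      rcases b7 with a7 | p7
      · exact not_adj_ll m t v _ _ h7
      rw [adj_lr] at h1 h3 h5 h7
      rw [adj_rl] at h2 h4 h6 h8
      simp only [ne_eq, Sum.inl.injEq, Sum.inr.injEq, reduceCtorEq, not_false_eq_true,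
        true_and, and_true] at hnd
      exact key m t hm hm14 v hodd hpos hlt hcond a0 a2 a4 a6 p1 p3 p5 p7
        h1 h2 h3 h4 h5 h6 h7 h8
        (by tauto) (by tauto) (by tauto) (by tauto)
        (by tauto) (by tauto) (by tauto) (by tauto)
    · -- x is a variable node
      rcases b1 with a1 | p1
      swap
      · exact not_adj_rr m t v _ _ h1
      rcases b2 with a2 | p2
      · exact not_adj_ll m t v _ _ h2
      rcases b3 with a3 | p3
      swap
      · exact not_adj_rr m t v _ _ h3
      rcases b4 with a4 | p4
      · exact not_adj_ll m t v _ _ h4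
      rcases b5 with a5 | p5
      swap
      · exact not_adj_rr m t v _ _ h5
      rcases b6 with a6 | p6
      · exact not_adj_ll m t v _ _ h6
      rcases b7 with a7 | p7
      swap
      · exact not_adj_rr m t v _ _ h7
      rw [adj_rl] at h1 h3 h5 h7
      rw [adj_lr] at h2 h4 h6 h8
      simp only [ne_eq, Sum.inl.injEq, Sum.inr.injEq, reduceCtorEq, not_false_eq_true,
        true_and, and_true] at hnd
      exact key m t hm hm14 v hodd hpos hlt hcond a7 a1 a3 a5 p0 p2 p4 p6
        h8 h1 h2 h3 h4 h5 h6 h7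
        (by tauto) (by tauto) (by tauto) (by tauto)
        (by tauto) (by tauto) (by tauto) (by tauto)
end

section
/- Let m be an even integer with m ≥ 14 and let v = (v_1, …, v_t) be an (m,t)-vector. Suppose there exist indices k_1, k_2, k_3, k_4 ∈ {1, …, t} with {k_1, k_2} ∩ {k_3, k_4} = ∅ such that (v_{k_1} + v_{k_2}) − (v_{k_3} + v_{k_4}) ∈ {0, m, −m}. Then the Tanner graph TG(H_m(v)) contains a cycle of length 8; in particular its girth is strictly less than 12. -/
/-- for an even `m ≥ 14` and an `(m,t)`-vector `v`, if there exist indices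
`k₁, k₂, k₃, k₄` with `{k₁, k₂} ∩ {k₃, k₄} = ∅` such that
`(v k₁ + v k₂) - (v k₃ + v k₄) ∈ {0, m, -m}`, then the Tanner graph `TG(H_m(v))` contains
a cycle of length `8`; in particular its girth is strictly less than `12`. -/
theorem statement8 (m t : ℕ) (hm : Even m) (hm14 : 14 ≤ m)
    (v : Fin t → ℕ) (hodd : ∀ i, Odd (v i)) (hpos : ∀ i, 0 < v i)
    (hmono : StrictMono v) (hlt : ∀ i, v i < m)
    (hcond : ∃ k1 k2 k3 k4 : Fin t, k1 ≠ k3 ∧ k1 ≠ k4 ∧ k2 ≠ k3 ∧ k2 ≠ k4 ∧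
      ((v k1 : ℤ) + (v k2 : ℤ)) - ((v k3 : ℤ) + (v k4 : ℤ)) ∈
        ({0, (m : ℤ), -(m : ℤ)} : Set ℤ)) :
    (∃ (x : (ZMod m) ⊕ (Fin t × Fin (m / 2))) (c : (tannerGraph m t v).Walk x x),
      c.IsCycle ∧ c.length = 8) ∧
    (tannerGraph m t v).egirth < 12 := by
  obtain ⟨k1, k2, k3, k4, h13, h14, h23, h24, hc⟩ := hcond
  have hm0 : m ≠ 0 := by omega
  have hm2 : 2 ∣ m := hm.two_dvd
  -- d : natural representative of v k1 - v k3 mod m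
  set d : ℕ := (v k1 + m - v k3) % m with hd
  have hvk3 : v k3 < m := hlt k3
  have hdlt : d < m := Nat.mod_lt _ (by omega)
  have hdeven : 2 ∣ d := by
    have h1 : 2 ∣ v k1 + m - v k3 := by
      obtain ⟨a, ha⟩ := hodd k1; obtain ⟨b, hb⟩ := hodd k3; obtain ⟨c, hcm⟩ := hm
      omega
    exact (Nat.dvd_mod_iff hm2).mpr h1
  -- cast of d
  have hdcast : ((d : ℕ) : ZMod m) = (v k1 : ZMod m) - (v k3 : ZMod m) := by
    rw [hd, ZMod.natCast_mod, Nat.cast_sub (by omega)]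
    push_cast
    simp [ZMod.natCast_self]
  have hvinj : ∀ i j : Fin t, i ≠ j → ((v i : ZMod m) ≠ (v j : ZMod m)) := by
    intro i j hij h
    rw [ZMod.natCast_eq_natCast_iff] at h
    exact hij (hmono.injective ((Nat.ModEq.eq_of_lt_of_lt h (hlt i) (hlt j))))
  have hd0 : d ≠ 0 := by
    intro h
    apply hvinj k1 k3 h13
    have : ((d : ℕ) : ZMod m) = 0 := by rw [h]; simp
    rw [hdcast] at this
    linear_combination this
  -- the Fin index j
  have hj2 : d / 2 < m / 2 := by omega
  set jF : Fin (m / 2) := ⟨d / 2, hj2⟩ with hjF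
  have hjval : 2 * (jF : ℕ) = d := by simp [hjF]; omega
  have h02 : (0 : ℕ) < m / 2 := by omega
  set zF : Fin (m / 2) := ⟨0, h02⟩ with hzF
  -- key congruence from hcond
  have hcongr : (v k2 : ZMod m) + ((v k1 : ZMod m) - (v k3 : ZMod m)) = (v k4 : ZMod m) := by
    have : ∀ c : ℤ, ((v k1 : ℤ) + (v k2 : ℤ)) - ((v k3 : ℤ) + (v k4 : ℤ)) = c →
        ((c : ℤ) : ZMod m) = 0 → (v k2 : ZMod m) + ((v k1 : ZMod m) - (v k3 : ZMod m)) = (v k4 : ZMod m) := by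
      intro c h hcz
      have := congrArg (fun z : ℤ => (z : ZMod m)) h
      push_cast at this
      rw [hcz] at this
      linear_combination this
    rcases hc with h | h | h
    · exact this 0 h (by simp)
    · exact this m h (by simp)
    · exact this (-m) h (by simp)
  -- vertices
  set x0 : (ZMod m) ⊕ (Fin t × Fin (m / 2)) := Sum.inl 0 with hx0
  set p1 : (ZMod m) ⊕ (Fin t × Fin (m / 2)) := Sum.inr (k1, zF) with hp1
  set c1 : (ZMod m) ⊕ (Fin t × Fin (m / 2)) := Sum.inl ((v k1 : ZMod m)) with hc1
  set p2 : (ZMod m) ⊕ (Fin t × Fin (m / 2)) := Sum.inr (k3, jF) with hp2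
  set c2 : (ZMod m) ⊕ (Fin t × Fin (m / 2)) := Sum.inl ((d : ZMod m)) with hc2
  set p3 : (ZMod m) ⊕ (Fin t × Fin (m / 2)) := Sum.inr (k2, jF) with hp3
  set c3 : (ZMod m) ⊕ (Fin t × Fin (m / 2)) := Sum.inl ((v k4 : ZMod m)) with hc3
  set p4 : (ZMod m) ⊕ (Fin t × Fin (m / 2)) := Sum.inr (k4, zF) with hp4
  have hG : ∀ (a : ZMod m) (p : Fin t × Fin (m/2)),
      (a = ((2 * (p.2 : ℕ) : ℕ) : ZMod m) ∨ a = ((v p.1 + 2 * (p.2 : ℕ) : ℕ) : ZMod m)) →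
      (tannerGraph m t v).Adj (Sum.inl a) (Sum.inr p) := by
    intro a p h
    exact ⟨by simp, Or.inl h⟩
  have e1 : (tannerGraph m t v).Adj x0 p1 := by
    apply hG; left; simp [hzF]
  have e2 : (tannerGraph m t v).Adj c1 p1 := by
    apply hG; right; simp [hzF]
  have hsum : ∀ i : Fin t, (v i + 2 * (jF : ℕ) : ℕ) = v i + d := by
    intro i; simp [hjF]; omega
  have e3 : (tannerGraph m t v).Adj c1 p2 := by
    apply hG; right
    show (v k1 : ZMod m) = ((v k3 + 2 * (jF : ℕ) : ℕ) : ZMod m)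
    rw [hsum]; push_cast; rw [hdcast]; ring
  have e4 : (tannerGraph m t v).Adj c2 p2 := by
    apply hG; left
    show ((d : ℕ) : ZMod m) = ((2 * (jF : ℕ) : ℕ) : ZMod m)
    rw [hjval]
  have e5 : (tannerGraph m t v).Adj c2 p3 := by
    apply hG; left
    show ((d : ℕ) : ZMod m) = ((2 * (jF : ℕ) : ℕ) : ZMod m)
    rw [hjval]
  have e6 : (tannerGraph m t v).Adj c3 p3 := by
    apply hG; right
    show (v k4 : ZMod m) = ((v k2 + 2 * (jF : ℕ) : ℕ) : ZMod m)
    rw [hsum]; push_cast; rw [hdcast, ← hcongr]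
  have e7 : (tannerGraph m t v).Adj c3 p4 := by
    apply hG; right; simp [hzF]
  have e8 : (tannerGraph m t v).Adj x0 p4 := by
    apply hG; left; simp [hzF]
  -- the walk
  let w : (tannerGraph m t v).Walk x0 x0 :=
    .cons e1 (.cons e2.symm (.cons e3 (.cons e4.symm (.cons e5 (.cons e6.symm
      (.cons e7 (.cons e8.symm .nil)))))))
  have hlen : w.length = 8 := rfl
  -- distinctness
  have hne01 : (0 : ZMod m) ≠ (v k1 : ZMod m) := by
    intro h
    have : ((0:ℕ) : ZMod m) = (v k1 : ZMod m) := by simpa using h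
    rw [ZMod.natCast_eq_natCast_iff] at this
    have h2 := Nat.ModEq.eq_of_lt_of_lt this (by omega) (hlt k1)
    have := hpos k1; omega
  have hne04 : (0 : ZMod m) ≠ (v k4 : ZMod m) := by
    intro h
    have : ((0:ℕ) : ZMod m) = (v k4 : ZMod m) := by simpa using h
    rw [ZMod.natCast_eq_natCast_iff] at this
    have h2 := Nat.ModEq.eq_of_lt_of_lt this (by omega) (hlt k4)
    have := hpos k4; omega
  have hne0d : (0 : ZMod m) ≠ ((d : ℕ) : ZMod m) := by
    intro h
    have : ((0:ℕ) : ZMod m) = ((d:ℕ) : ZMod m) := by simpa using h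
    rw [ZMod.natCast_eq_natCast_iff] at this
    have h2 := Nat.ModEq.eq_of_lt_of_lt this (by omega) hdlt
    omega
  -- parity separation
  have hpar : ∀ a b : ℕ, Odd a → 2 ∣ b → ((a : ZMod m) ≠ (b : ZMod m)) := by
    intro a b ha hb h
    have h2 := congrArg (ZMod.castHom hm2 (ZMod 2)) h
    simp only [map_natCast] at h2
    rw [ZMod.natCast_eq_natCast_iff] at h2
    have h3 : a % 2 = b % 2 := h2
    obtain ⟨u, hu⟩ := ha
    omega
  have hne1d : ((v k1 : ℕ) : ZMod m) ≠ ((d : ℕ) : ZMod m) := hpar _ _ (hodd k1) hdeven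
  have hne4d : ((v k4 : ℕ) : ZMod m) ≠ ((d : ℕ) : ZMod m) := hpar _ _ (hodd k4) hdeven
  have hne14 : ((v k1 : ℕ) : ZMod m) ≠ ((v k4 : ℕ) : ZMod m) := hvinj k1 k4 h14
  have hjz : jF ≠ zF := by
    intro h
    rw [hjF, hzF, Fin.mk.injEq] at h
    omega
  refine ⟨⟨x0, w, ?_, hlen⟩, ?_⟩
  · rw [SimpleGraph.Walk.isCycle_def]
    refine ⟨?_, by simp [w], ?_⟩
    · rw [SimpleGraph.Walk.isTrail_def]
      simp only [w, SimpleGraph.Walk.edges_cons, SimpleGraph.Walk.edges_nil,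
        hx0, hp1, hc1, hp2, hc2, hp3, hc3, hp4]
      simp [List.nodup_cons, Sym2.eq_iff, hne01, hne04, hne0d, hne1d, hne4d, hne14,
        hne01.symm, hne04.symm, hne0d.symm, hne1d.symm, hne4d.symm, hne14.symm,
        hjz, hjz.symm, h13, h14, h23, h24, h13.symm, h14.symm, h23.symm, h24.symm,
        Prod.ext_iff]
    · simp only [w, SimpleGraph.Walk.support_cons, SimpleGraph.Walk.support_nil,
        List.tail_cons, hx0, hp1, hc1, hp2, hc2, hp3, hc3, hp4]
      simp [List.nodup_cons, hne01, hne04, hne0d, hne1d, hne4d, hne14,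
        hne01.symm, hne04.symm, hne0d.symm, hne1d.symm, hne4d.symm, hne14.symm,
        hjz, hjz.symm, h13, h14, h23, h24, h13.symm, h14.symm, h23.symm, h24.symm,
        Prod.ext_iff]
  · have hcyc : w.IsCycle := by
      rw [SimpleGraph.Walk.isCycle_def]
      refine ⟨?_, by simp [w], ?_⟩
      · rw [SimpleGraph.Walk.isTrail_def]
        simp only [w, SimpleGraph.Walk.edges_cons, SimpleGraph.Walk.edges_nil,
          hx0, hp1, hc1, hp2, hc2, hp3, hc3, hp4]
        simp [List.nodup_cons, Sym2.eq_iff, hne01, hne04, hne0d, hne1d, hne4d, hne14,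
          hne01.symm, hne04.symm, hne0d.symm, hne1d.symm, hne4d.symm, hne14.symm,
          hjz, hjz.symm, h13, h14, h23, h24, h13.symm, h14.symm, h23.symm, h24.symm,
          Prod.ext_iff]
      · simp only [w, SimpleGraph.Walk.support_cons, SimpleGraph.Walk.support_nil,
          List.tail_cons, hx0, hp1, hc1, hp2, hc2, hp3, hc3, hp4]
        simp [List.nodup_cons, hne01, hne04, hne0d, hne1d, hne4d, hne14,
          hne01.symm, hne04.symm, hne0d.symm, hne1d.symm, hne4d.symm, hne14.symm,
          hjz, hjz.symm, h13, h14, h23, h24, h13.symm, h14.symm, h23.symm, h24.symm,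
          Prod.ext_iff]
    have h8 : (tannerGraph m t v).egirth ≤ 8 := by
      have := SimpleGraph.le_egirth.mp (le_refl (tannerGraph m t v).egirth) x0 w hcyc
      rw [hlen] at this
      exact_mod_cast this
    exact lt_of_le_of_lt h8 (by norm_num)
end

section
/- Let m be an even integer with m ≥ 14 and let v = (v_1, …, v_t) be an (m,t)-vector with t ≥ 3. Then the girth of the Tanner graph TG(H_m(v)) equals 12 if and only if for all indices k_1, k_2, k_3, k_4 ∈ {1, …, t} with {k_1, k_2} ∩ {k_3, k_4} = ∅ one has (v_{k_1} + v_{k_2}) − (v_{k_3} + v_{k_4}) ∉ {0, m, −m}. -/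
namespace ZMod

theorem natCast_injOn_Iio {m : ℕ} : Set.InjOn (Nat.cast : ℕ → ZMod m) (Set.Iio m) := by
  intro x hx y hy h
  rwa [natCast_eq_natCast_iff', Nat.mod_eq_of_lt hx, Nat.mod_eq_of_lt hy] at h

theorem natCast_add_eq_natCast_add_iff {m x₁ x₂ x₃ x₄ : ℕ} (h₁ : x₁ < m) (h₂ : x₂ < m)
    (h₃ : x₃ < m) (h₄ : x₄ < m) :
    ((x₁ : ℕ) : ZMod m) + x₂ = x₃ + x₄ ↔
      ((x₁ : ℤ) + x₂) - (x₃ + x₄) ∈ ({0, (m : ℤ), -(m : ℤ)} : Set ℤ) := by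
  have : ((x₁ : ℕ) : ZMod m) + x₂ = x₃ + x₄ ↔ (m : ℤ) ∣ ((x₁ : ℤ) + x₂) - (x₃ + x₄) := by
    rw [← intCast_zmod_eq_zero_iff_dvd]; push_cast; exact sub_eq_zero.symm
  rw [this, Set.mem_insert_iff, Set.mem_insert_iff, Set.mem_singleton_iff]
  constructor
  · rintro ⟨c, hc⟩
    obtain ⟨h, h'⟩ : -1 ≤ c ∧ c ≤ 1 := by constructor <;> nlinarith
    interval_cases c <;> simp_all
  · rintro (h | h | h) <;> rw [h] <;> simp

end ZMod

namespace TannerGraph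

open SimpleGraph Walk Sum

variable {m t : ℕ} {v : Fin t → ℕ}

def evenCheck (j : Fin (m / 2)) : ZMod m := 2 * ((j : ℕ) : ZMod m)

lemma adj_inl_inr_iff {a : ZMod m} {p : Fin t × Fin (m / 2)} :
    (tannerGraph m t v).Adj (inl a) (inr p) ↔ a = evenCheck p.2 ∨ a = evenCheck p.2 + v p.1 := by
  simp [tannerGraph, evenCheck, add_comm]

lemma adj_of_eq_evenCheck (i : Fin t) {j : Fin (m / 2)} {a : ZMod m} (ha : a = evenCheck j) :
    (tannerGraph m t v).Adj (inl a) (inr (i, j)) :=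
  adj_inl_inr_iff.2 (.inl ha)

lemma adj_of_eq_evenCheck_add (i : Fin t) {j : Fin (m / 2)} {a : ZMod m}
    (ha : a = evenCheck j + v i) : (tannerGraph m t v).Adj (inl a) (inr (i, j)) :=
  adj_inl_inr_iff.2 (.inr ha)

lemma not_adj_inl_inl {a b : ZMod m} : ¬ (tannerGraph m t v).Adj (inl a) (inl b) := by
  simp [tannerGraph]

lemma not_adj_inr_inr {p q : Fin t × Fin (m / 2)} :
    ¬ (tannerGraph m t v).Adj (inr p) (inr q) := by
  simp [tannerGraph]

lemma evenCheck_injective : Function.Injective (evenCheck : Fin (m / 2) → ZMod m) := by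
  intro j j' h
  have hj := j.isLt
  have hj' := j'.isLt
  have := ZMod.natCast_injOn_Iio (show 2 * (j : ℕ) < m by omega) (show 2 * (j' : ℕ) < m by omega)
    (by simpa [evenCheck] using h)
  exact Fin.ext (by omega)

abbrev parity (hm : 2 ∣ m) : ZMod m →+* ZMod 2 := ZMod.castHom hm (ZMod 2)

lemma parity_evenCheck (hm : 2 ∣ m) (j : Fin (m / 2)) : parity hm (evenCheck j) = 0 := by
  rw [evenCheck, map_mul, map_ofNat]; exact zero_mul _

lemma parity_natCast_of_odd (hm : 2 ∣ m) {n : ℕ} (hn : Odd n) : parity hm (n : ZMod m) = 1 := by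
  rw [map_natCast]; exact ZMod.natCast_eq_one_iff_odd.2 hn

def sign (hm : 2 ∣ m) (a : ZMod m) : ZMod m := if parity hm a = 0 then 1 else -1

lemma isUnit_sign (hm : 2 ∣ m) (a : ZMod m) : IsUnit (sign hm a) := by
  unfold sign; split_ifs <;> simp

lemma sign_eq_neg_of_parity (hm : 2 ∣ m) {a b : ZMod m} (h : parity hm b = parity hm a + 1) :
    sign hm b = -sign hm a := by
  unfold sign
  rcases (by decide : ∀ x : ZMod 2, x = 0 ∨ x = 1) (parity hm a) with ha | ha <;>
    simp [h, ha, show (1 + 1 : ZMod 2) = 0 from rfl]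

lemma parity_of_adj (hm : 2 ∣ m) (hodd : ∀ i, Odd (v i)) {a : ZMod m} {p : Fin t × Fin (m / 2)}
    (h : (tannerGraph m t v).Adj (inl a) (inr p)) :
    (a = evenCheck p.2 ∧ parity hm a = 0) ∨ (a = evenCheck p.2 + v p.1 ∧ parity hm a = 1) := by
  rcases adj_inl_inr_iff.1 h with rfl | rfl
  · exact .inl ⟨rfl, parity_evenCheck hm _⟩
  · refine .inr ⟨rfl, ?_⟩
    rw [map_add, parity_evenCheck hm, parity_natCast_of_odd hm (hodd _), zero_add]

lemma eq_add_sign_mul_of_adj (hm : 2 ∣ m) (hodd : ∀ i, Odd (v i)) {a b : ZMod m}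
    {p : Fin t × Fin (m / 2)}
    (ha : (tannerGraph m t v).Adj (inl a) (inr p)) (hb : (tannerGraph m t v).Adj (inr p) (inl b))
    (hab : a ≠ b) : b = a + sign hm a * v p.1 ∧ parity hm b = parity hm a + 1 := by
  rcases parity_of_adj hm hodd ha with ⟨rfl, ha⟩ | ⟨rfl, ha⟩ <;>
    rcases parity_of_adj hm hodd hb.symm with ⟨rfl, hb⟩ | ⟨rfl, hb⟩
  · exact absurd rfl hab
  · simp [sign, ha, hb]
  · simp [sign, ha, hb, show (1 + 1 : ZMod 2) = 0 from rfl]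
  · exact absurd rfl hab

lemma fst_ne_fst_of_adj (hm : 2 ∣ m) (hodd : ∀ i, Odd (v i)) {a : ZMod m}
    {p q : Fin t × Fin (m / 2)} (hp : (tannerGraph m t v).Adj (inl a) (inr p))
    (hq : (tannerGraph m t v).Adj (inl a) (inr q)) (hpq : p ≠ q) : p.1 ≠ q.1 := by
  intro h
  refine hpq (Prod.ext h (evenCheck_injective ?_))
  rcases parity_of_adj hm hodd hp with ⟨rfl, ha⟩ | ⟨rfl, ha⟩ <;>
    rcases parity_of_adj hm hodd hq with ⟨hq, ha'⟩ | ⟨hq, ha'⟩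
  · exact hq
  · exact absurd (ha.symm.trans ha') zero_ne_one
  · exact absurd (ha'.symm.trans ha) zero_ne_one
  · rw [h] at hq; exact add_right_cancel hq

lemma exists_eq_cons_cons {a b : ZMod m} (w : (tannerGraph m t v).Walk (inl a) (inl b))
    (hw : ¬ w.Nil) :
    ∃ (p : Fin t × Fin (m / 2)) (c : ZMod m) (h₁ : (tannerGraph m t v).Adj (inl a) (inr p))
      (h₂ : (tannerGraph m t v).Adj (inr p) (inl c))
      (w' : (tannerGraph m t v).Walk (inl c) (inl b)),
      w = cons h₁ (cons h₂ w') := by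
  cases w with
  | nil => exact absurd Walk.Nil.nil hw
  | @cons _ x _ h₁ w₁ =>
    rcases x with c | p
    · exact absurd h₁ not_adj_inl_inl
    cases w₁ with
    | @cons _ y _ h₂ w₂ =>
      rcases y with c | q
      · exact ⟨p, c, h₁, h₂, w₂, rfl⟩
      · exact absurd h₂ not_adj_inr_inr

lemma exists_length_eq_two_mul_of_isTrail (hm : 2 ∣ m) (hodd : ∀ i, Odd (v i)) {a b : ZMod m}
    {w : (tannerGraph m t v).Walk (inl a) (inl b)} (hw : w.IsTrail) :
    ∃ L : ℕ, w.length = 2 * L ∧ parity hm b = parity hm a + L := by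
  induction hn : w.length using Nat.strong_induction_on generalizing a with
  | _ n ih =>
  by_cases hnil : w.Nil
  · obtain rfl : a = b := inl_injective hnil.eq
    exact ⟨0, by rw [← hn, Walk.length_eq_zero_iff.2 hnil], by simp⟩
  obtain ⟨p, c, h₁, h₂, w', rfl⟩ := exists_eq_cons_cons w hnil
  have hac : a ≠ c := by
    rintro rfl
    simp [Walk.isTrail_def, Walk.edges_cons, Sym2.eq_swap] at hw
  rw [Walk.length_cons, Walk.length_cons] at hn
  obtain ⟨L, hL, hpar⟩ := ih w'.length (by omega) hw.of_cons.of_cons rfl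
  refine ⟨L + 1, by omega, ?_⟩
  rw [hpar, (eq_add_sign_mul_of_adj hm hodd h₁ h₂ hac).2]
  push_cast; ring

lemma eq_add_sign_mul_sub_of_adj (hm : 2 ∣ m) (hodd : ∀ i, Odd (v i)) {a b c : ZMod m}
    {p q : Fin t × Fin (m / 2)}
    (h₁ : (tannerGraph m t v).Adj (inl a) (inr p)) (h₂ : (tannerGraph m t v).Adj (inr p) (inl b))
    (h₃ : (tannerGraph m t v).Adj (inl b) (inr q)) (h₄ : (tannerGraph m t v).Adj (inr q) (inl c))
    (hab : a ≠ b) (hbc : b ≠ c) :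
    c = a + sign hm a * (v p.1 - v q.1) ∧ sign hm c = sign hm a := by
  obtain ⟨hb, hpb⟩ := eq_add_sign_mul_of_adj hm hodd h₁ h₂ hab
  obtain ⟨hc, hpc⟩ := eq_add_sign_mul_of_adj hm hodd h₃ h₄ hbc
  have hsb := sign_eq_neg_of_parity hm hpb
  refine ⟨by rw [hc, hsb, hb]; ring, ?_⟩
  rw [sign_eq_neg_of_parity hm hpc, hsb, neg_neg]

lemma exists_isCycle_inl {x : ZMod m ⊕ (Fin t × Fin (m / 2))}
    {w : (tannerGraph m t v).Walk x x} (hw : w.IsCycle) :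
    ∃ (a : ZMod m) (w' : (tannerGraph m t v).Walk (inl a) (inl a)),
      w'.IsCycle ∧ w'.length = w.length := by
  rcases x with a | p
  · exact ⟨a, w, hw, rfl⟩
  cases w with
  | nil => exact absurd hw Walk.not_isCycle_nil
  | @cons _ y _ h w =>
    rcases y with b | q
    · have hb : inl b ∈ (cons h w).support := by simp
      exact ⟨b, _, hw.rotate hb, Walk.length_rotate _ _ _⟩
    · exact absurd h not_adj_inr_inr

lemma length_ne_four_of_isCycle (hm : 2 ∣ m) (hodd : ∀ i, Odd (v i))
    (hv : Function.Injective v) (hlt : ∀ i, v i < m) {a : ZMod m}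
    {w : (tannerGraph m t v).Walk (inl a) (inl a)} (hw : w.IsCycle) : w.length ≠ 4 := by
  intro hlen
  obtain ⟨p, b, h₁, h₂, w, rfl⟩ :=
    exists_eq_cons_cons w fun h ↦ by simp [Walk.length_eq_zero_iff.2 h] at hlen
  obtain ⟨q, c, h₃, h₄, w, rfl⟩ :=
    exists_eq_cons_cons w fun h ↦ by simp [Walk.length_eq_zero_iff.2 h] at hlen
  have hnil : w.Nil := Walk.length_eq_zero_iff.1 (by simpa using hlen)
  obtain rfl : a = c := (inl_injective hnil.eq).symm
  obtain rfl := hnil.eq_nil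
  have hnd := hw.support_nodup
  simp only [Walk.support_cons, Walk.support_nil, List.tail_cons] at hnd
  have hab : a ≠ b := by rintro rfl; simp at hnd
  have hpq : p ≠ q := by rintro rfl; simp at hnd
  obtain ⟨hcyc, -⟩ := eq_add_sign_mul_sub_of_adj hm hodd h₁ h₂ h₃ h₄ hab hab.symm
  have hvpq : ((v p.1 : ℕ) : ZMod m) = v q.1 := by
    have : sign hm a * ((v p.1 : ZMod m) - v q.1) = 0 := by linear_combination -hcyc
    exact sub_eq_zero.1 ((isUnit_sign hm a).mul_right_eq_zero.1 this)
  exact fst_ne_fst_of_adj hm hodd h₂.symm h₃ hpq (hv (ZMod.natCast_injOn_Iio (hlt _) (hlt _) hvpq))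

lemma exists_sum_eq_of_isCycle_of_length_eq_eight (hm : 2 ∣ m) (hodd : ∀ i, Odd (v i))
    {a : ZMod m} {w : (tannerGraph m t v).Walk (inl a) (inl a)} (hw : w.IsCycle)
    (hlen : w.length = 8) :
    ∃ k₁ k₂ k₃ k₄ : Fin t, k₁ ≠ k₃ ∧ k₁ ≠ k₄ ∧ k₂ ≠ k₃ ∧ k₂ ≠ k₄ ∧
      ((v k₁ : ℕ) : ZMod m) + v k₂ = v k₃ + v k₄ := by
  obtain ⟨p₁, a₂, h₁, h₂, w, rfl⟩ :=
    exists_eq_cons_cons w fun h ↦ by simp [Walk.length_eq_zero_iff.2 h] at hlen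
  obtain ⟨p₂, a₃, h₃, h₄, w, rfl⟩ :=
    exists_eq_cons_cons w fun h ↦ by simp [Walk.length_eq_zero_iff.2 h] at hlen
  obtain ⟨p₃, a₄, h₅, h₆, w, rfl⟩ :=
    exists_eq_cons_cons w fun h ↦ by simp [Walk.length_eq_zero_iff.2 h] at hlen
  obtain ⟨p₄, a₁, h₇, h₈, w, rfl⟩ :=
    exists_eq_cons_cons w fun h ↦ by simp [Walk.length_eq_zero_iff.2 h] at hlen
  have hnil : w.Nil := Walk.length_eq_zero_iff.1 (by simpa using hlen)
  obtain rfl : a = a₁ := (inl_injective hnil.eq).symm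
  obtain rfl := hnil.eq_nil
  have hnd := hw.support_nodup
  simp only [Walk.support_cons, Walk.support_nil, List.tail_cons] at hnd
  have h12 : a ≠ a₂ := by rintro rfl; simp at hnd
  have h23 : a₂ ≠ a₃ := by rintro rfl; simp at hnd
  have h34 : a₃ ≠ a₄ := by rintro rfl; simp at hnd
  have h41 : a₄ ≠ a := by rintro rfl; simp at hnd
  have hp12 : p₁.1 ≠ p₂.1 := fst_ne_fst_of_adj hm hodd h₂.symm h₃ (by rintro rfl; simp at hnd)
  have hp23 : p₂.1 ≠ p₃.1 := fst_ne_fst_of_adj hm hodd h₄.symm h₅ (by rintro rfl; simp at hnd)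
  have hp34 : p₃.1 ≠ p₄.1 := fst_ne_fst_of_adj hm hodd h₆.symm h₇ (by rintro rfl; simp at hnd)
  have hp41 : p₄.1 ≠ p₁.1 := fst_ne_fst_of_adj hm hodd h₈.symm h₁ (by rintro rfl; simp at hnd)
  obtain ⟨ha₃, hs₃⟩ := eq_add_sign_mul_sub_of_adj hm hodd h₁ h₂ h₃ h₄ h12 h23
  obtain ⟨ha, -⟩ := eq_add_sign_mul_sub_of_adj hm hodd h₅ h₆ h₇ h₈ h34 h41
  refine ⟨p₁.1, p₃.1, p₂.1, p₄.1, hp12, hp41.symm, hp23.symm, hp34, ?_⟩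
  have : sign hm a * ((v p₁.1 : ZMod m) + v p₃.1 - (v p₂.1 + v p₄.1)) = 0 := by
    rw [hs₃] at ha
    linear_combination -ha₃ - ha
  exact sub_eq_zero.1 ((isUnit_sign hm a).mul_right_eq_zero.1 this)

lemma twelve_le_length_of_isCycle (hm : 2 ∣ m) (hodd : ∀ i, Odd (v i))
    (hv : Function.Injective v) (hlt : ∀ i, v i < m)
    (hsum : ∀ k₁ k₂ k₃ k₄ : Fin t, k₁ ≠ k₃ → k₁ ≠ k₄ → k₂ ≠ k₃ → k₂ ≠ k₄ →
      ((v k₁ : ℕ) : ZMod m) + v k₂ ≠ v k₃ + v k₄)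
    {x : ZMod m ⊕ (Fin t × Fin (m / 2))} {w : (tannerGraph m t v).Walk x x} (hw : w.IsCycle) :
    12 ≤ w.length := by
  obtain ⟨a, w', hw, hlen⟩ := exists_isCycle_inl hw
  rw [← hlen]
  obtain ⟨L, hL, hpar⟩ := exists_length_eq_two_mul_of_isTrail hm hodd hw.isCircuit.isTrail
  have hL2 : 2 ∣ L := (ZMod.natCast_eq_zero_iff L 2).1 (left_eq_add.1 hpar)
  have h3 := hw.three_le_length
  have h4 := length_ne_four_of_isCycle hm hodd hv hlt hw
  have h8 : w'.length ≠ 8 := fun h8 ↦ by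
    obtain ⟨k₁, k₂, k₃, k₄, h13, h14, h23, h24, h⟩ :=
      exists_sum_eq_of_isCycle_of_length_eq_eight hm hodd hw h8
    exact hsum k₁ k₂ k₃ k₄ h13 h14 h23 h24 h
  omega

lemma exists_evenCheck_eq [NeZero m] (hm : 2 ∣ m) {e : ZMod m} (he : parity hm e = 0) :
    ∃ j : Fin (m / 2), evenCheck j = e := by
  have h2 : 2 ∣ e.val := by
    rwa [← ZMod.natCast_zmod_val e, map_natCast, ZMod.natCast_eq_zero_iff] at he
  have hlt := e.val_lt
  refine ⟨⟨e.val / 2, by omega⟩, ?_⟩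
  rw [evenCheck, ← Nat.cast_ofNat, ← Nat.cast_mul, Nat.mul_div_cancel' h2, ZMod.natCast_zmod_val]

lemma ne_of_parity (hm : 2 ∣ m) {a b : ZMod m} (ha : parity hm a = 0) (hb : parity hm b = 1) :
    a ≠ b := by
  rintro rfl; exact zero_ne_one (ha.symm.trans hb)

lemma egirth_le_eight [NeZero m] (hm : 2 ∣ m) (hodd : ∀ i, Odd (v i))
    (hv : Function.Injective v) (hlt : ∀ i, v i < m)
    {k₁ k₂ k₃ k₄ : Fin t} (h13 : k₁ ≠ k₃) (h14 : k₁ ≠ k₄) (h23 : k₂ ≠ k₃) (h24 : k₂ ≠ k₄)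
    (hsum : ((v k₁ : ℕ) : ZMod m) + v k₂ = v k₃ + v k₄) :
    (tannerGraph m t v).egirth ≤ 8 := by
  have hpar (k : Fin t) : parity hm (v k : ZMod m) = 1 := parity_natCast_of_odd hm (hodd k)
  obtain ⟨j₀, hj₀⟩ := exists_evenCheck_eq hm (map_zero (parity hm))
  have hE : parity hm (v k₁ - v k₃ : ZMod m) = 0 := by rw [map_sub, hpar, hpar, sub_self]
  obtain ⟨j, hj⟩ := exists_evenCheck_eq hm hE
  have hj₀j : j₀ ≠ j := by
    intro h
    rw [h, hj] at hj₀
    exact h13 (hv (ZMod.natCast_injOn_Iio (hlt _) (hlt _) (sub_eq_zero.1 hj₀)))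
  let w : (tannerGraph m t v).Walk (inl 0) (inl 0) :=
    cons (adj_of_eq_evenCheck k₁ hj₀.symm) <|
    cons (adj_of_eq_evenCheck_add k₁ (a := v k₁) (by rw [hj₀, zero_add])).symm <|
    cons (adj_of_eq_evenCheck_add k₃ (by rw [hj]; ring)) <|
    cons (adj_of_eq_evenCheck k₃ hj.symm).symm <|
    cons (adj_of_eq_evenCheck k₂ hj.symm) <|
    cons (adj_of_eq_evenCheck_add k₂ (a := v k₄) (by rw [hj]; linear_combination -hsum)).symm <|
    cons (adj_of_eq_evenCheck_add k₄ (by rw [hj₀, zero_add])) <|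
    cons (adj_of_eq_evenCheck k₄ hj₀.symm).symm nil
  -- The two edges at a variable node differ by the parity of their check node, so only distinct
  -- variable nodes and distinct consecutive check nodes are needed for a trail.
  have hw : w.IsTrail := by
    have c₁ := ne_of_parity hm (map_zero _) (hpar k₁)
    have c₂ := ne_of_parity hm hE (hpar k₁)
    have c₃ := ne_of_parity hm hE (hpar k₄)
    have c₄ := ne_of_parity hm (map_zero _) (hpar k₄)
    simp [w, Walk.isTrail_def, h13, h14, h23.symm, h24, hj₀j, hj₀j.symm, c₁, c₁.symm, c₂.symm, c₃,
      c₄, c₄.symm]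
  exact ((Walk.isCircuit_def w).2 ⟨hw, by simp [w]⟩).egirth_le_length

lemma egirth_le_twelve [NeZero m] (hm : 2 ∣ m) (hodd : ∀ i, Odd (v i))
    (hv : Function.Injective v) (hlt : ∀ i, v i < m)
    {i₀ i₁ i₂ : Fin t} (h01 : i₀ ≠ i₁) (h02 : i₀ ≠ i₂) (h12 : i₁ ≠ i₂) :
    (tannerGraph m t v).egirth ≤ 12 := by
  have hpar (k : Fin t) : parity hm (v k : ZMod m) = 1 := parity_natCast_of_odd hm (hodd k)
  have hne {k l : Fin t} (h : k ≠ l) : ((v k : ℕ) : ZMod m) ≠ v l :=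
    fun e ↦ h (hv (ZMod.natCast_injOn_Iio (hlt _) (hlt _) e))
  have hA : parity hm (v i₀ - v i₁ : ZMod m) = 0 := by rw [map_sub, hpar, hpar, sub_self]
  have hB : parity hm (v i₂ - v i₁ : ZMod m) = 0 := by rw [map_sub, hpar, hpar, sub_self]
  have hC : parity hm (v i₀ - v i₁ + v i₂ : ZMod m) = 1 := by rw [map_add, hA, hpar, zero_add]
  obtain ⟨j₀, hj₀⟩ := exists_evenCheck_eq hm (map_zero (parity hm))
  obtain ⟨jA, hjA⟩ := exists_evenCheck_eq hm hA
  obtain ⟨jB, hjB⟩ := exists_evenCheck_eq hm hB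
  have h0A : j₀ ≠ jA := fun h ↦ hne h01 (by rw [← sub_eq_zero, ← hjA, ← h, hj₀])
  have h0B : j₀ ≠ jB := fun h ↦ hne h12.symm (by rw [← sub_eq_zero, ← hjB, ← h, hj₀])
  have hAB : jA ≠ jB := fun h ↦ hne h02 (by rw [← sub_left_inj, ← hjA, ← hjB, h])
  let w : (tannerGraph m t v).Walk (inl 0) (inl 0) :=
    cons (adj_of_eq_evenCheck i₀ hj₀.symm) <|
    cons (adj_of_eq_evenCheck_add i₀ (a := v i₀) (by rw [hj₀, zero_add])).symm <|
    cons (adj_of_eq_evenCheck_add i₁ (by rw [hjA]; ring)) <|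
    cons (adj_of_eq_evenCheck i₁ hjA.symm).symm <|
    cons (adj_of_eq_evenCheck i₂ hjA.symm) <|
    cons (adj_of_eq_evenCheck_add i₂ (by rw [hjA])).symm <|
    cons (adj_of_eq_evenCheck_add i₀ (by rw [hjB]; ring)) <|
    cons (adj_of_eq_evenCheck i₀ hjB.symm).symm <|
    cons (adj_of_eq_evenCheck i₁ hjB.symm) <|
    cons (adj_of_eq_evenCheck_add i₁ (a := v i₂) (by rw [hjB]; ring)).symm <|
    cons (adj_of_eq_evenCheck_add i₂ (by rw [hj₀, zero_add])) <|
    cons (adj_of_eq_evenCheck i₂ hj₀.symm).symm nil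
  have hw : w.IsTrail := by
    have c₁ := ne_of_parity hm (map_zero _) (hpar i₀)
    have c₂ := ne_of_parity hm hA (hpar i₀)
    have c₃ := ne_of_parity hm hA hC
    have c₄ := ne_of_parity hm hB hC
    have c₅ := ne_of_parity hm hB (hpar i₂)
    have c₆ := ne_of_parity hm (map_zero _) (hpar i₂)
    simp [w, Walk.isTrail_def, h01, h02, h12, h01.symm, h02.symm, h12.symm, h0A, h0B, hAB,
      h0A.symm, h0B.symm, c₁, c₁.symm, c₂.symm, c₃, c₄.symm, c₅, c₆, c₆.symm]
  exact ((Walk.isCircuit_def w).2 ⟨hw, by simp [w]⟩).egirth_le_length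

end TannerGraph

open TannerGraph

theorem statement9_general (m t : ℕ) (hm : Even m) (ht : 3 ≤ t)
    (v : Fin t → ℕ) (hodd : ∀ i, Odd (v i))
    (hmono : StrictMono v) (hlt : ∀ i, v i < m) :
    (tannerGraph m t v).egirth = 12 ↔
    ∀ k1 k2 k3 k4 : Fin t, k1 ≠ k3 → k1 ≠ k4 → k2 ≠ k3 → k2 ≠ k4 →
      ((v k1 : ℤ) + (v k2 : ℤ)) - ((v k3 : ℤ) + (v k4 : ℤ)) ∉
        ({0, (m : ℤ), -(m : ℤ)} : Set ℤ) := by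
  have hm2 : 2 ∣ m := hm.two_dvd
  have : NeZero m := ⟨by have := hlt ⟨0, by omega⟩; omega⟩
  simp only [← ZMod.natCast_add_eq_natCast_add_iff (hlt _) (hlt _) (hlt _) (hlt _)]
  constructor
  · intro h12 k₁ k₂ k₃ k₄ h13 h14 h23 h24 hsum
    have := egirth_le_eight hm2 hodd hmono.injective hlt h13 h14 h23 h24 hsum
    rw [h12] at this
    norm_num at this
  · intro hsum
    refine le_antisymm (egirth_le_twelve hm2 hodd hmono.injective hlt
      (i₀ := ⟨0, by omega⟩) (i₁ := ⟨1, by omega⟩) (i₂ := ⟨2, by omega⟩)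
      (by simp [Fin.ext_iff]) (by simp [Fin.ext_iff]) (by simp [Fin.ext_iff])) ?_
    exact SimpleGraph.le_egirth.2 fun _ _ hw ↦
      mod_cast twelve_le_length_of_isCycle hm2 hodd hmono.injective hlt hsum hw

/-- for an even `m ≥ 14` and an `(m,t)`-vector `v` with `t ≥ 3`, the girth of
the Tanner graph `TG(H_m(v))` equals `12` if and only if for all indices `k₁, k₂, k₃, k₄`
with `{k₁, k₂} ∩ {k₃, k₄} = ∅` one has `(v k₁ + v k₂) - (v k₃ + v k₄) ∉ {0, m, -m}`. -/
theorem statement9 (m t : ℕ) (hm : Even m) (hm14 : 14 ≤ m) (ht : 3 ≤ t)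
    (v : Fin t → ℕ) (hodd : ∀ i, Odd (v i)) (hpos : ∀ i, 0 < v i)
    (hmono : StrictMono v) (hlt : ∀ i, v i < m) :
    (tannerGraph m t v).egirth = 12 ↔
    ∀ k1 k2 k3 k4 : Fin t, k1 ≠ k3 → k1 ≠ k4 → k2 ≠ k3 → k2 ≠ k4 →
      ((v k1 : ℤ) + (v k2 : ℤ)) - ((v k3 : ℤ) + (v k4 : ℤ)) ∉
        ({0, (m : ℤ), -(m : ℤ)} : Set ℤ) :=
  statement9_general m t hm ht v hodd hmono hlt
end

section
/- Let m be an even integer with m ≥ 14, let v = (v_1, …, v_t) be an (m,t)-vector, and let s be a nonnegative integer. Suppose B assigns to each column index (i,j), 1 ≤ i ≤ t, 0 ≤ j < m/2, a 3-element subset B(i,j) of {0, 1, …, m+s−1} such that B(i,j) ∩ {0, …, m−1} = {2j mod m, (v_i + 2j) mod m} (i.e., the first m rows of the extended matrix coincide with H_m(v) and its third 1 lies in one of the s added rows), and such that any two distinct sets B(i,j) and B(i',j') intersect in at most one point (i.e., the Tanner graph of the extended column-weight-3 matrix has girth at least 6). Then s ≥ t. In other words, the minimum number of rows that must be added to H_m(v)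 to obtain a girth-6 column-weight-3 parity-check matrix is at least t. -/
/-!
Every column has exactly one `1` outside the first `m` rows. If two columns put that `1` in the
same added row, the girth condition forces their two `1`s among the first `m` rows to lie in
disjoint rows; hence an added row is shared by at most `m / 2` columns. The `t · (m / 2)`
columns therefore need at least `t` added rows.
-/

open Finset

lemma two_mul_card_le_card_of_pairwiseDisjoint {ι α : Type*} [DecidableEq α]
    {F : Finset ι} {U : Finset α} {C : ι → Finset α}
    (hsub : ∀ p ∈ F, C p ⊆ U) (hcard : ∀ p ∈ F, #(C p) = 2)
    (hdisj : (F : Set ι).PairwiseDisjoint C) :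
    2 * #F ≤ #U :=
  calc 2 * #F = ∑ p ∈ F, #(C p) := by rw [sum_congr rfl hcard, sum_const, smul_eq_mul, mul_comm]
    _ = #(F.biUnion C) := (card_biUnion hdisj).symm
    _ ≤ #U := card_le_card (biUnion_subset.mpr hsub)

lemma disjoint_inter_inter_of_mem_of_notMem {α : Type*} [DecidableEq α] {X Y U : Finset α}
    {r : α} (hX : r ∈ X) (hY : r ∈ Y) (hr : r ∉ U) (hXY : #(X ∩ Y) ≤ 1) :
    Disjoint (X ∩ U) (Y ∩ U) := by
  rw [disjoint_left]
  intro x hxX hxY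
  have hxr : x = r :=
    card_le_one.mp hXY x (mem_inter.mpr ⟨(mem_inter.mp hxX).1, (mem_inter.mp hxY).1⟩) r
      (mem_inter.mpr ⟨hX, hY⟩)
  exact hr (hxr ▸ (mem_inter.mp hxX).2)

lemma card_le_mul_div_two_of_card_inter_le_one {ι : Type*} [Fintype ι] {m s : ℕ}
    {B : ι → Finset ℕ} (hcard : ∀ p, #(B p) = 3) (hsub : ∀ p, B p ⊆ range (m + s))
    (hbase : ∀ p, #(B p ∩ range m) = 2) (hmeet : ∀ p q, p ≠ q → #(B p ∩ B q) ≤ 1) :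
    Fintype.card ι ≤ s * (m / 2) := by
  have hextra : ∀ p, (B p \ range m).Nonempty := fun p => by
    rw [← card_pos]
    have := card_inter_add_card_sdiff (B p) (range m)
    have := hcard p
    have := hbase p
    omega
  choose f hf using hextra
  have hf_mem : ∀ p ∈ (univ : Finset ι), f p ∈ Ico m (m + s) := fun p _ => by
    obtain ⟨hfB, hfm⟩ := mem_sdiff.mp (hf p)
    simpa [mem_range] using And.intro hfm (hsub p hfB)
  have hfiber : ∀ r ∈ Ico m (m + s), #{p | f p = r} ≤ m / 2 := fun r _ => by
    have hdisj : (({p | f p = r} : Finset ι) : Set ι).PairwiseDisjoint (B · ∩ range m) := by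
      intro p hp q hq hpq
      have hrq : f p ∈ B q := by
        rw [(mem_filter.mp hp).2, ← (mem_filter.mp hq).2]
        exact (mem_sdiff.mp (hf q)).1
      exact disjoint_inter_inter_of_mem_of_notMem (mem_sdiff.mp (hf p)).1 hrq
        (mem_sdiff.mp (hf p)).2 (hmeet p q hpq)
    have := two_mul_card_le_card_of_pairwiseDisjoint
      (fun p _ => inter_subset_right) (fun p _ => hbase p) hdisj
    rw [card_range] at this
    omega
  simpa [card_univ, mul_comm] using card_le_mul_card_image_of_maps_to hf_mem (m / 2) hfiber

lemma mod_ne_add_mod_of_pos_of_lt {a v m : ℕ} (hpos : 0 < v) (hlt : v < m) :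
    a % m ≠ (v + a) % m := by
  intro h
  have hv : v % m = 0 := by simpa using Nat.sub_mod_eq_zero_of_mod_eq h.symm
  rw [Nat.mod_eq_of_lt hlt] at hv
  omega

theorem statement12_general (m t s : ℕ) (hm14 : 14 ≤ m)
    (v : Fin t → ℕ) (hpos : ∀ i, 0 < v i)
    (hlt : ∀ i, v i < m)
    (B : Fin t × Fin (m / 2) → Finset ℕ)
    (hcard : ∀ p, (B p).card = 3)
    (hsub : ∀ p, B p ⊆ Finset.range (m + s))
    (hfirst : ∀ p : Fin t × Fin (m / 2),
      B p ∩ Finset.range m = {2 * (p.2 : ℕ) % m, (v p.1 + 2 * (p.2 : ℕ)) % m})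
    (hmeet : ∀ p q, p ≠ q → (B p ∩ B q).card ≤ 1) :
    t ≤ s := by
  have hbase : ∀ p, #(B p ∩ range m) = 2 := fun p => by
    rw [hfirst p, card_pair (mod_ne_add_mod_of_pos_of_lt (hpos p.1) (hlt p.1))]
  have hcount := card_le_mul_div_two_of_card_inter_le_one hcard hsub hbase hmeet
  rw [Fintype.card_prod, Fintype.card_fin, Fintype.card_fin] at hcount
  exact Nat.le_of_mul_le_mul_right hcount (by omega)

/-- let `m ≥ 14` be even, `v` an `(m,t)`-vector, and `s ≥ 0`.  Suppose `B`
assigns to each column index `(i, j)` a 3-element subset of `{0, …, m+s-1}` whose intersection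
with `{0, …, m-1}` is `{2j mod m, (v i + 2j) mod m}` (so the first `m` rows of the extended
matrix coincide with `H_m(v)` and the third `1` of each column lies in one of the `s` added
rows), and such that any two distinct sets `B p`, `B q` meet in at most one point (i.e. the
Tanner graph of the extended column-weight-3 matrix has girth at least `6`).  Then `s ≥ t`:
at least `t` rows must be added to `H_m(v)` to obtain a girth-6 column-weight-3 parity-check
matrix. -/
theorem statement12 (m t s : ℕ) (hm : Even m) (hm14 : 14 ≤ m)
    (v : Fin t → ℕ) (hodd : ∀ i, Odd (v i)) (hpos : ∀ i, 0 < v i)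
    (hmono : StrictMono v) (hlt : ∀ i, v i < m)
    (B : Fin t × Fin (m / 2) → Finset ℕ)
    (hcard : ∀ p, (B p).card = 3)
    (hsub : ∀ p, B p ⊆ Finset.range (m + s))
    (hfirst : ∀ p : Fin t × Fin (m / 2),
      B p ∩ Finset.range m = {2 * (p.2 : ℕ) % m, (v p.1 + 2 * (p.2 : ℕ)) % m})
    (hmeet : ∀ p q, p ≠ q → (B p ∩ B q).card ≤ 1) :
    t ≤ s :=
  statement12_general m t s hm14 v hpos hlt B hcard hsub hfirst hmeet
end

section
/- Let m be an even integer with m ≥ 14 and let v = (v_1, …, v_t) be an (m,t)-vector. For 1 ≤ i ≤ t and 0 ≤ j < m/2 define the triple B_{i,j} = {2j mod m, (v_i + 2j) mod m, m + i − 1} ⊆ {0, 1, …, m+t−1}. Then each B_{i,j} has exactly 3 elements, the triples are pairwise distinct, and any two distinct triples intersect in at most one point. Consequently the incidence matrix M_m(v) of the family {B_{i,j}} has constant column weight 3 and its Tanner graph has girth at least 6. -/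
/-- The triple `B_{i,j} = {2j mod m, (v i + 2j) mod m, m + i} ⊆ {0, 1, …, m+t-1}` (here
`i : Fin t` is 0-indexed, so `m + i` corresponds to the point `m + i - 1` for 1-indexed `i`). -/
def triple (m : ℕ) {t : ℕ} (v : Fin t → ℕ) (p : Fin t × Fin (m / 2)) : Finset ℕ :=
  {2 * (p.2 : ℕ) % m, (v p.1 + 2 * (p.2 : ℕ)) % m, m + (p.1 : ℕ)}

/-- for an even `m ≥ 14` and an `(m,t)`-vector `v`, each triple
`B_{i,j} = {2j mod m, (v i + 2j) mod m, m + i - 1}` has exactly `3` elements, the triples are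
pairwise distinct, and any two distinct triples intersect in at most one point.  Consequently
the incidence matrix `M_m(v)` of the family `{B_{i,j}}` has constant column weight `3` and its
Tanner graph has girth at least `6`. -/
theorem statement13 (m t : ℕ) (hm : Even m) (hm14 : 14 ≤ m)
    (v : Fin t → ℕ) (hodd : ∀ i, Odd (v i)) (hpos : ∀ i, 0 < v i)
    (hmono : StrictMono v) (hlt : ∀ i, v i < m) :
    (∀ p : Fin t × Fin (m / 2), (triple m v p).card = 3) ∧
    Function.Injective (triple m v) ∧
    (∀ p q : Fin t × Fin (m / 2), p ≠ q → (triple m v p ∩ triple m v q).card ≤ 1) := by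
  have hm0 : 0 < m := by omega
  have h2m : (2:ℕ) ∣ m := hm.two_dvd
  have hvpar : ∀ i, v i % 2 = 1 := fun i => Nat.odd_iff.mp (hodd i)
  have ha : ∀ j : Fin (m/2), 2 * (j:ℕ) % m = 2 * (j:ℕ) := by
    intro j
    apply Nat.mod_eq_of_lt
    have := j.2
    omega
  have hblt : ∀ (i : Fin t) (j : Fin (m/2)), (v i + 2*(j:ℕ)) % m < m :=
    fun i j => Nat.mod_lt _ hm0
  have hb : ∀ (i : Fin t) (j : Fin (m/2)),
      (v i + 2*(j:ℕ)) % m = v i + 2*(j:ℕ) ∨ (v i + 2*(j:ℕ)) % m + m = v i + 2*(j:ℕ) := by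
    intro i j
    rcases lt_or_ge (v i + 2*(j:ℕ)) m with h | h
    · left; exact Nat.mod_eq_of_lt h
    · right
      rw [Nat.mod_eq_sub_mod h, Nat.mod_eq_of_lt (by have := hlt i; have := j.2; omega)]
      omega
  have hbodd : ∀ (i : Fin t) (j : Fin (m/2)), (v i + 2*(j:ℕ)) % m % 2 = 1 := by
    intro i j
    rw [Nat.mod_mod_of_dvd _ h2m]
    have := hvpar i
    omega
  refine ⟨?_, ?_, ?_⟩
  · rintro ⟨i, j⟩
    rw [triple]
    rw [Finset.card_insert_of_notMem, Finset.card_insert_of_notMem, Finset.card_singleton]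
    · simp only [Finset.mem_singleton]
      have := hblt i j
      omega
    · simp only [Finset.mem_insert, Finset.mem_singleton]
      push_neg
      have h1 := hbodd i j; have h2 := ha j; have h3 := j.2
      constructor <;> omega
  · rintro ⟨i, j⟩ ⟨i', j'⟩ hpq
    have hc : m + (i:ℕ) ∈ triple m v (i', j') := by
      rw [← hpq]; simp [triple]
    have hA : 2*(j:ℕ) % m ∈ triple m v (i', j') := by
      rw [← hpq]; simp [triple]
    simp only [triple, Finset.mem_insert, Finset.mem_singleton] at hc hA
    have hii : (i:ℕ) = i' := by
      have := hblt i' j'; have h2 := ha j'; have h3 := j'.2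
      omega
    have hjj : (j:ℕ) = j' := by
      have h1 := ha j; have h2 := ha j'; have h3 := hbodd i' j'
      have h4 := j.2; have h5 := j'.2
      omega
    exact Prod.ext (Fin.ext hii) (Fin.ext hjj)
  · rintro ⟨i, j⟩ ⟨i', j'⟩ hne
    rw [Finset.card_le_one]
    intro x hx y hy
    simp only [Finset.mem_inter, triple, Finset.mem_insert, Finset.mem_singleton] at hx hy
    rw [ha j, ha j'] at hx hy
    have h2 := hb i j; have h2' := hb i' j'
    have h3 := hbodd i j; have h3' := hbodd i' j'
    have h4 := hblt i j; have h4' := hblt i' j'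
    have h5 := j.2; have h5' := j'.2
    have h6 := hlt i; have h6' := hlt i'
    have h7 := hpos i; have h7' := hpos i'
    have key : ∀ z, (z = 2*(j:ℕ) ∨ z = (v i + 2*(j:ℕ)) % m ∨ z = m + (i:ℕ)) →
        (z = 2*(j':ℕ) ∨ z = (v i' + 2*(j':ℕ)) % m ∨ z = m + (i':ℕ)) →
        (z = 2*(j:ℕ) ∧ z = 2*(j':ℕ)) ∨
        (z = (v i + 2*(j:ℕ)) % m ∧ z = (v i' + 2*(j':ℕ)) % m) ∨
        (z = m + (i:ℕ) ∧ z = m + (i':ℕ)) := by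
      intro z hz1 hz2
      rcases hz1 with h|h|h <;> rcases hz2 with h'|h'|h' <;> omega
    have kx := key x hx.1 hx.2
    have ky := key y hy.1 hy.2
    by_cases hii : (i:ℕ) = i'
    · have heq : i = i' := Fin.ext hii
      subst heq
      have hjj : (j:ℕ) ≠ j' := fun h => hne (by rw [Prod.ext_iff]; exact ⟨rfl, Fin.ext h⟩)
      rcases h2 with h2|h2 <;> rcases h2' with h2'|h2' <;>
        rcases kx with ⟨e1,e2⟩|⟨e1,e2⟩|⟨e1,e2⟩ <;>
        rcases ky with ⟨f1,f2⟩|⟨f1,f2⟩|⟨f1,f2⟩ <;> omega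
    · have hvv : v i ≠ v i' := fun h => hii (congrArg Fin.val (hmono.injective h))
      rcases h2 with h2|h2 <;> rcases h2' with h2'|h2' <;>
        rcases kx with ⟨e1,e2⟩|⟨e1,e2⟩|⟨e1,e2⟩ <;>
        rcases ky with ⟨f1,f2⟩|⟨f1,f2⟩|⟨f1,f2⟩ <;> omega
end
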